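/- arXiv:1410.7032 — 5 statements merged into one kernel-verified Lean document; each statement's English description precedes it below -/
import Mathlib

section
/- Let G_2 ⊆ {1,...,N}×{1,...,N} and let p : G_2 → (0,1) with p̲ := min over G_2 of p and p̄ := max over G_2 of p, where p̄ < 1. For a finite admissible word σ = (σ_1,...,σ_k) (meaning each consecutive pair lies in G_2) let p_σ := p_{σ_1σ_2}⋯p_{σ_{k-1}σ_k}, and let Λ_j := {σ : p_{σ^-} ≥ p̲^j > p_σ}, where σ^- drops the last letter. Let k_{1j} := min_{σ∈Λ_j} |σ| and k_{2j} := max_{σ∈Λ_j} |σ|. Then with N_1 := min{h ≥ 1 : p̄^h < p̲}, for every j ≥ 1 one has j ≤ k_{1j} ≤ k_{2j} ≤ 3N_1 j. -/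
/-!
Every transition weight lies in `[p̲, p̄]`, so a word of length `n` has weight between `p̲ ^ (n - 1)`
and `p̄ ^ (n - 1)`. For `σ ∈ Λ_j`, the bound `p_σ < p̲ ^ j` forces `|σ| ≥ j + 2`, while
`p_{σ⁻} ≥ p̲ ^ j > (p̄ ^ N₁) ^ j` forces `|σ⁻| ≤ N₁ j`, whence `|σ| ≤ N₁ j + 1 ≤ 3 N₁ j`.
-/

open Finset

/-- Product of transition weights along a word (list of letters);
for words of length ≤ 1 this is `1`. -/
def pword {N : ℕ} (p : Fin N → Fin N → ℝ) (l : List (Fin N)) : ℝ :=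
  ((l.zip l.tail).map fun ab => p ab.1 ab.2).prod

/-- A finite admissible word: nonempty and every consecutive pair lies in `G2`. -/
def admissibleG {N : ℕ} (G2 : Finset (Fin N × Fin N)) (l : List (Fin N)) : Prop :=
  l ≠ [] ∧ l.Chain' fun a b => (a, b) ∈ G2

theorem le_csInf_le_csSup_le_of_subset_Icc {α : Type*} [ConditionallyCompleteLattice α]
    {S : Set α} {a b : α} (hS : S.Nonempty) (hab : S ⊆ Set.Icc a b) :
    a ≤ sInf S ∧ sInf S ≤ sSup S ∧ sSup S ≤ b :=
  ⟨le_csInf hS fun _ hx => (hab hx).1,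
    csInf_le_csSup hS ⟨a, fun _ hx => (hab hx).1⟩ ⟨b, fun _ hx => (hab hx).2⟩,
    csSup_le hS fun _ hx => (hab hx).2⟩

theorem sInf_pow_lt_mem {b c : ℝ} (hb : b < 1) (hc0 : 0 < c) (hc1 : c < 1) :
    sInf {h : ℕ | 1 ≤ h ∧ b ^ h < c} ∈ {h : ℕ | 1 ≤ h ∧ b ^ h < c} := by
  obtain ⟨n, hn⟩ := exists_pow_lt_of_lt_one hc0 hb
  refine Nat.sInf_mem ⟨n, Nat.one_le_iff_ne_zero.mpr ?_, hn⟩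
  rintro rfl
  exact (pow_zero b ▸ hn).not_gt hc1

section pword

variable {N : ℕ} {G2 : Finset (Fin N × Fin N)} {p : Fin N → Fin N → ℝ}

@[simp]
theorem pword_nil : pword p [] = 1 := rfl

@[simp]
theorem pword_singleton (a : Fin N) : pword p [a] = 1 := rfl

@[simp]
theorem pword_cons_cons (a b : Fin N) (l : List (Fin N)) :
    pword p (a :: b :: l) = p a b * pword p (b :: l) := by
  simp [pword]

theorem pow_le_pword {c : ℝ} (hc0 : 0 ≤ c) (hc : ∀ ij ∈ G2, c ≤ p ij.1 ij.2) :
    ∀ {l : List (Fin N)}, l.IsChain (fun a b => (a, b) ∈ G2) →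
      c ^ (l.length - 1) ≤ pword p l
  | [], _ | [_], _ => by simp
  | a :: b :: l, h => by
    rw [List.isChain_cons_cons] at h
    have ih := pow_le_pword hc0 hc h.2
    simp only [pword_cons_cons, List.length_cons, Nat.add_sub_cancel, pow_succ'] at ih ⊢
    exact mul_le_mul (hc _ h.1) ih (by positivity) (hc0.trans (hc _ h.1))

theorem pword_le_pow {b : ℝ} (hp : ∀ ij ∈ G2, 0 ≤ p ij.1 ij.2 ∧ p ij.1 ij.2 ≤ b) :
    ∀ {l : List (Fin N)}, l.IsChain (fun a b => (a, b) ∈ G2) →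
      pword p l ≤ b ^ (l.length - 1)
  | [], _ | [_], _ => by simp
  | a :: c :: l, h => by
    rw [List.isChain_cons_cons] at h
    have ih := pword_le_pow hp h.2
    simp only [pword_cons_cons, List.length_cons, Nat.add_sub_cancel, pow_succ'] at ih ⊢
    have hb : 0 ≤ b := (hp _ h.1).1.trans (hp _ h.1).2
    exact mul_le_mul_of_nonneg (hp _ h.1).2 ih (hp _ h.1).1 (by positivity)

theorem add_two_le_length_of_pword_lt_pow {c : ℝ} (hc0 : 0 < c) (hc1 : c < 1)
    (hc : ∀ ij ∈ G2, c ≤ p ij.1 ij.2) {l : List (Fin N)}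
    (hl : l.IsChain fun a b => (a, b) ∈ G2) {j : ℕ} (h : pword p l < c ^ j) :
    j + 2 ≤ l.length := by
  have : c ^ (l.length - 1) < c ^ j := (pow_le_pword hc0.le hc hl).trans_lt h
  have := (pow_lt_pow_iff_right_of_lt_one₀ hc0 hc1).mp this
  omega

theorem length_le_of_pow_lt_pword {b : ℝ} (hb0 : 0 < b) (hb1 : b < 1)
    (hp : ∀ ij ∈ G2, 0 ≤ p ij.1 ij.2 ∧ p ij.1 ij.2 ≤ b) {l : List (Fin N)}
    (hl : l.IsChain fun a b => (a, b) ∈ G2) {m : ℕ} (h : b ^ m < pword p l) :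
    l.length ≤ m := by
  have : b ^ m < b ^ (l.length - 1) := h.trans_le (pword_le_pow hp hl)
  have := (pow_lt_pow_iff_right_of_lt_one₀ hb0 hb1).mp this
  omega

end pword

theorem stmt0 {N : ℕ} (G2 : Finset (Fin N × Fin N)) (hG2 : G2.Nonempty)
    (p : Fin N → Fin N → ℝ)
    (hp : ∀ ij ∈ G2, 0 < p ij.1 ij.2 ∧ p ij.1 ij.2 < 1)
    (pmin pmax : ℝ)
    (hpmin : pmin = G2.inf' hG2 fun ij => p ij.1 ij.2)
    (hpmax : pmax = G2.sup' hG2 fun ij => p ij.1 ij.2)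
    (Λ : ℕ → Set (List (Fin N)))
    (hΛ : ∀ j, Λ j = {l | admissibleG G2 l ∧
      pmin ^ j ≤ pword p l.dropLast ∧ pword p l < pmin ^ j})
    (N1 : ℕ) (hN1 : N1 = sInf {h : ℕ | 1 ≤ h ∧ pmax ^ h < pmin})
    (j : ℕ) (hj : 1 ≤ j) (hne : (Λ j).Nonempty) :
    j ≤ sInf (List.length '' Λ j) ∧
      sInf (List.length '' Λ j) ≤ sSup (List.length '' Λ j) ∧
      sSup (List.length '' Λ j) ≤ 3 * N1 * j := by
  have hmin_le : ∀ ij ∈ G2, pmin ≤ p ij.1 ij.2 := fun ij h => hpmin ▸ inf'_le _ h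
  have hle_max : ∀ ij ∈ G2, 0 ≤ p ij.1 ij.2 ∧ p ij.1 ij.2 ≤ pmax :=
    fun ij h => ⟨(hp ij h).1.le, hpmax ▸ le_sup' (fun ij => p ij.1 ij.2) h⟩
  obtain ⟨a, ha, hpmin_eq⟩ := G2.exists_mem_eq_inf' hG2 fun ij => p ij.1 ij.2
  obtain ⟨b, hb, hpmax_eq⟩ := G2.exists_mem_eq_sup' hG2 fun ij => p ij.1 ij.2
  have hmin0 : 0 < pmin := hpmin ▸ hpmin_eq ▸ (hp a ha).1
  have hmin1 : pmin < 1 := hpmin ▸ hpmin_eq ▸ (hp a ha).2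
  have hmax0 : 0 < pmax := hpmax ▸ hpmax_eq ▸ (hp b hb).1
  have hmax1 : pmax < 1 := hpmax ▸ hpmax_eq ▸ (hp b hb).2
  obtain ⟨hN1_pos, hN1_lt⟩ := hN1 ▸ sInf_pow_lt_mem hmax1 hmin0 hmin1
  have hpow_lt : pmax ^ (N1 * j) < pmin ^ j :=
    pow_mul pmax N1 j ▸ pow_lt_pow_left₀ hN1_lt (by positivity) (by omega)
  refine le_csInf_le_csSup_le_of_subset_Icc (hne.image _) ?_
  rintro _ ⟨l, hl, rfl⟩
  obtain ⟨⟨-, hchain⟩, hdrop, hlt⟩ := hΛ j ▸ hl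
  have hlow := add_two_le_length_of_pword_lt_pow hmin0 hmin1 hmin_le hchain hlt
  have hup := length_le_of_pow_lt_pword hmax0 hmax1 hle_max hchain.dropLast
    (hpow_lt.trans_le hdrop)
  rw [List.length_dropLast] at hup
  have : 1 ≤ N1 * j := Nat.one_le_iff_ne_zero.mpr (by positivity)
  rw [mul_assoc]
  constructor <;> omega
end

section
/- Let P be an irreducible N×N row-stochastic matrix and define ξ(i,n) := Σ_{τ ∈ Γ(i,n)} p_τ log p_τ, where Γ(i,n) is the set of admissible words of length n+1 starting at i. Define Δ_n(i,j) := |ξ(i,n) − ξ(j,n)|. Then there exists a constant C_1 > 0 such that Δ_n(i,j) ≤ C_1 for all n ≥ 1 and all i, j ∈ {1,...,N}. -/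
/-!
Splitting off the first step of a word gives `ξ(·, n + 1) = h + P ξ(·, n)` with
`h i = ∑ⱼ pᵢⱼ log pᵢⱼ`, hence `ξ(·, n) = ∑_{k<n} Pᵏ h`. By irreducibility and the maximum
principle, `P x = x` forces `x` to be constant, so the functional `g ↦ g i - g j` vanishes on
`ker (P - 1)` and factors as `ψ ∘ (P - 1)`. On the partial sums `∑_{k<n} Pᵏ h` this telescopes
to `ψ (Pⁿ h - h)`, which is bounded because `P` does not increase the sup norm.
-/

open Finset

/-- `ξ(i,n) = ∑_{τ ∈ Γ(i,n)} p_τ log p_τ`: the sum over all words of length `n+1`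
starting at `i` (non-admissible words contribute `0`, convention `0 · log 0 = 0`). -/
noncomputable def xi {N : ℕ} (P : Matrix (Fin N) (Fin N) ℝ) (i : Fin N) (n : ℕ) : ℝ :=
  ∑ τ ∈ Finset.univ.filter (fun τ : Fin (n + 1) → Fin N => τ 0 = i),
    (∏ t : Fin n, P (τ t.castSucc) (τ t.succ)) *
      Real.log (∏ t : Fin n, P (τ t.castSucc) (τ t.succ))

open Matrix

section Paths

variable {ι : Type*}

def pathProb (P : Matrix ι ι ℝ) {n : ℕ} (τ : Fin (n + 1) → ι) : ℝ :=
  ∏ t : Fin n, P (τ t.castSucc) (τ t.succ)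

lemma pathProb_cons (P : Matrix ι ι ℝ) {n : ℕ} (i : ι) (τ : Fin (n + 1) → ι) :
    pathProb P (Fin.cons i τ : Fin (n + 2) → ι) = P i (τ 0) * pathProb P τ := by
  simp only [pathProb, Fin.prod_univ_succ, ← Fin.succ_castSucc, Fin.cons_succ]
  rfl

variable [Fintype ι] [DecidableEq ι]

lemma sum_paths_succ {n : ℕ} (i : ι) (g : (Fin (n + 2) → ι) → ℝ) :
    ∑ τ ∈ univ.filter (fun τ : Fin (n + 2) → ι => τ 0 = i), g τ
      = ∑ j, ∑ τ ∈ univ.filter (fun τ : Fin (n + 1) → ι => τ 0 = j), g (Fin.cons i τ) := by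
  rw [sum_fiberwise]
  refine sum_nbij' Fin.tail (fun τ => (Fin.cons i τ : Fin (n + 2) → ι))
    (by simp) (by simp) (fun τ hτ => by simp [← (mem_filter.1 hτ).2]) (by simp)
    (fun τ hτ => by simp [← (mem_filter.1 hτ).2])

lemma sum_pathProb {P : Matrix ι ι ℝ} (hP : P ∈ rowStochastic ℝ ι) (n : ℕ) (i : ι) :
    ∑ τ ∈ univ.filter (fun τ : Fin (n + 1) → ι => τ 0 = i), pathProb P τ = 1 := by
  induction n generalizing i with
  | zero =>
    have : univ.filter (fun τ : Fin 1 → ι => τ 0 = i) = {fun _ => i} := by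
      ext τ
      simp [funext_iff, Fin.forall_fin_one]
    simp [this, pathProb]
  | succ n ih =>
    rw [sum_paths_succ]
    calc _ = ∑ j, P i j * ∑ τ ∈ univ.filter (fun τ : Fin (n + 1) → ι => τ 0 = j), pathProb P τ :=
          sum_congr rfl fun j _ => by
            rw [mul_sum]
            exact sum_congr rfl fun τ hτ => by rw [pathProb_cons, (mem_filter.1 hτ).2]
      _ = 1 := by simp [ih, sum_row_of_mem_rowStochastic hP]

end Paths

noncomputable def negEntropy {ι : Type*} [Fintype ι] (P : Matrix ι ι ℝ) (i : ι) : ℝ :=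
  ∑ j, P i j * Real.log (P i j)

section Xi

variable {N : ℕ} {P : Matrix (Fin N) (Fin N) ℝ}

lemma xi_eq_sum_pathProb (i : Fin N) (n : ℕ) :
    xi P i n = ∑ τ ∈ univ.filter (fun τ : Fin (n + 1) → Fin N => τ 0 = i),
      pathProb P τ * Real.log (pathProb P τ) := rfl

lemma xi_succ (hP : P ∈ rowStochastic ℝ (Fin N)) (n : ℕ) (i : Fin N) :
    xi P i (n + 1) = negEntropy P i + (P *ᵥ fun j => xi P j n) i := by
  rw [xi_eq_sum_pathProb, sum_paths_succ, negEntropy, mulVec, dotProduct, ← sum_add_distrib]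
  refine sum_congr rfl fun j _ => ?_
  rw [xi_eq_sum_pathProb, mul_sum, ← mul_one (P i j * Real.log (P i j)), ← sum_pathProb hP n j,
    mul_sum, ← sum_add_distrib]
  refine sum_congr rfl fun τ hτ => ?_
  rw [pathProb_cons, (mem_filter.1 hτ).2]
  have := Real.negMulLog_mul (P i j) (pathProb P τ)
  simp only [Real.negMulLog] at this
  linarith

lemma xi_eq_sum_pow_mulVec (hP : P ∈ rowStochastic ℝ (Fin N)) (n : ℕ) :
    (fun i => xi P i n) = ∑ k ∈ range n, P ^ k *ᵥ negEntropy P := by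
  induction n with
  | zero => funext i; simp [xi_eq_sum_pathProb, pathProb]
  | succ n ih =>
    funext i
    rw [xi_succ hP, ih, sum_range_succ', mulVec_sum]
    simp [mulVec_mulVec, ← pow_succ', add_comm]

end Xi

section Stochastic

variable {ι : Type*} [Fintype ι] [DecidableEq ι] {P : Matrix ι ι ℝ}

lemma norm_mulVec_le_of_mem_rowStochastic (hP : P ∈ rowStochastic ℝ ι) (v : ι → ℝ) :
    ‖P *ᵥ v‖ ≤ ‖v‖ := by
  refine (pi_norm_le_iff_of_nonneg (norm_nonneg v)).2 fun i => ?_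
  calc ‖(P *ᵥ v) i‖ ≤ ∑ j, P i j * ‖v‖ := by
        refine (norm_sum_le _ _).trans (sum_le_sum fun j _ => ?_)
        rw [norm_mul, Real.norm_of_nonneg (nonneg_of_mem_rowStochastic hP)]
        exact mul_le_mul_of_nonneg_left (norm_le_pi_norm v j) (nonneg_of_mem_rowStochastic hP)
    _ = ‖v‖ := by rw [← sum_mul, sum_row_of_mem_rowStochastic hP, one_mul]

lemma apply_eq_of_mulVec_eq_self (hP : P ∈ rowStochastic ℝ ι)
    (hirr : ∀ i j, ∃ m, 0 < (P ^ m) i j) {x : ι → ℝ} (hx : P *ᵥ x = x) (a b : ι) :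
    x a = x b := by
  have hpow (m : ℕ) : (P ^ m) *ᵥ x = x := by
    induction m with
    | zero => simp
    | succ m ih => rw [pow_succ, ← mulVec_mulVec, hx, ih]
  have : Nonempty ι := ⟨a⟩
  -- maximum principle: `x` is a `P ^ m`-average of values `≤ x i₀`, all with positive weight
  obtain ⟨i₀, hmax⟩ := Finite.exists_max x
  suffices ∀ c, x c = x i₀ by rw [this a, this b]
  intro c
  obtain ⟨m, hpos⟩ := hirr i₀ c
  have hPm : P ^ m ∈ rowStochastic ℝ ι := pow_mem hP m
  have hzero : ∑ k, (P ^ m) i₀ k * (x i₀ - x k) = 0 := by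
    simp only [mul_sub, sum_sub_distrib, ← sum_mul, sum_row_of_mem_rowStochastic hPm, one_mul]
    rw [sub_eq_zero]
    exact (congrFun (hpow m) i₀).symm
  have := (sum_eq_zero_iff_of_nonneg fun k _ =>
    mul_nonneg (nonneg_of_mem_rowStochastic hPm) (sub_nonneg.2 (hmax k))).1 hzero c (mem_univ c)
  linarith [(mul_eq_zero.1 this).resolve_left hpos.ne']

lemma exists_dual_apply_sub_eq (hP : P ∈ rowStochastic ℝ ι)
    (hirr : ∀ i j, ∃ m, 0 < (P ^ m) i j) (i j : ι) :
    ∃ ψ : Module.Dual ℝ (ι → ℝ), ∀ g, g i - g j = ψ (P *ᵥ g - g) := by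
  set f : (ι → ℝ) →ₗ[ℝ] ι → ℝ := P.mulVecLin - LinearMap.id
  have hφ : (LinearMap.proj (R := ℝ) (φ := fun _ : ι => ℝ) i - LinearMap.proj j) ∈
      (LinearMap.ker f).dualAnnihilator := by
    refine (Submodule.mem_dualAnnihilator _).2 fun v hv => ?_
    have hv : P *ᵥ v = v := sub_eq_zero.1 (LinearMap.mem_ker.1 hv)
    simp [apply_eq_of_mulVec_eq_self hP hirr hv i j]
  rw [← LinearMap.range_dualMap_eq_dualAnnihilator_ker] at hφ
  obtain ⟨ψ, hψ⟩ := hφ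
  exact ⟨ψ, fun g => by simpa [f] using (LinearMap.congr_fun hψ g).symm⟩

lemma exists_bound_sum_pow_mulVec_sub (hP : P ∈ rowStochastic ℝ ι)
    (hirr : ∀ i j, ∃ m, 0 < (P ^ m) i j) (h : ι → ℝ) :
    ∃ C, ∀ n i j, |(∑ k ∈ range n, P ^ k *ᵥ h) i - (∑ k ∈ range n, P ^ k *ᵥ h) j| ≤ C := by
  have hpair (i j : ι) : ∃ C, ∀ n,
      |(∑ k ∈ range n, P ^ k *ᵥ h) i - (∑ k ∈ range n, P ^ k *ᵥ h) j| ≤ C := by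
    obtain ⟨ψ, hψ⟩ := exists_dual_apply_sub_eq hP hirr i j
    let ψc : (ι → ℝ) →L[ℝ] ℝ := ⟨ψ, ψ.continuous_of_finiteDimensional⟩
    refine ⟨‖ψc‖ * (2 * ‖h‖), fun n => ?_⟩
    have htel :
        P *ᵥ (∑ k ∈ range n, P ^ k *ᵥ h) - ∑ k ∈ range n, P ^ k *ᵥ h = P ^ n *ᵥ h - h := by
      rw [mulVec_sum, ← sum_sub_distrib]
      simpa [mulVec_mulVec, ← pow_succ'] using sum_range_sub (fun k => P ^ k *ᵥ h) n
    rw [hψ, htel, ← Real.norm_eq_abs]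
    calc ‖ψc (P ^ n *ᵥ h - h)‖ ≤ ‖ψc‖ * ‖P ^ n *ᵥ h - h‖ := ψc.le_opNorm _
      _ ≤ ‖ψc‖ * (2 * ‖h‖) := by
        gcongr
        linarith [norm_sub_le (P ^ n *ᵥ h) h,
          norm_mulVec_le_of_mem_rowStochastic (pow_mem hP n) h]
  choose C hC using hpair
  obtain ⟨M, hM⟩ := Finite.exists_le fun p : ι × ι => C p.1 p.2
  exact ⟨M, fun n i j => (hC i j n).trans (hM (i, j))⟩

end Stochastic

theorem stmt4 {N : ℕ} (P : Matrix (Fin N) (Fin N) ℝ)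
    (hnn : ∀ i j, 0 ≤ P i j) (hrow : ∀ i, ∑ j, P i j = 1)
    (hirr : ∀ i j, ∃ m, 1 ≤ m ∧ 0 < (P ^ m) i j) :
    ∃ C1 : ℝ, 0 < C1 ∧ ∀ n : ℕ, 1 ≤ n → ∀ i j : Fin N,
      |xi P i n - xi P j n| ≤ C1 := by
  have hP : P ∈ rowStochastic ℝ (Fin N) := mem_rowStochastic_iff_sum.2 ⟨hnn, hrow⟩
  obtain ⟨C, hC⟩ := exists_bound_sum_pow_mulVec_sub hP
    (fun i j => (hirr i j).imp fun _ => And.right) (negEntropy P)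
  refine ⟨max C 1, lt_max_of_lt_right one_pos, fun n _ i j => ?_⟩
  have hxi := congrFun (xi_eq_sum_pow_mulVec hP n)
  rw [hxi i, hxi j]
  exact (hC n i j).trans (le_max_left C 1)
end

section
/- Let P be an irreducible N×N row-stochastic matrix, let (c_{ij}) ∈ (0,1) be contraction ratios defined on the indices with p_{ij} > 0, and let (q_i)_{i=1}^N be a positive probability vector. For a word σ of length k starting at σ_1 set m_σ := q_{σ_1} p_σ and c_σ := Π c_{σ_hσ_{h+1}}. Define u_k := Σ_{σ ∈ G_k} m_σ log m_σ and l_k := Σ_{σ ∈ G_k} m_σ log c_σ, where G_k is the set of admissible words of length k. Then for k ≥ 3, u_k = u_2 + (k−2)u_0 + x_k and l_k = l_2 + (k−2)l_0 + y_k, where u_0 := Σ_i v_i Σ_j p_{ij} log p_{ij}, l_0 := Σ_i v_i Σ_j p_{ij} log c_{ij} (v the normalized positive left eigenvector of P), and the error terms satisfy |x_k| ≤ δ_0 and |y_k| ≤ δ_3 for constants δ_0, δ_3 independent of k. -/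
/-
Appending a letter to the words of length `k` adds to `u_k` (resp. `l_k`) the expectation, under
the law `q P^(k-1)` of the chain at time `k - 1`, of the one-step function
`f i = ∑ j, P i j * log (P i j)` (resp. `log (c i j)`). Since `P` is irreducible, its harmonic
vectors are constant, so `1 - P` has corank one and the Poisson equation
`f = h - P h + (v ⬝ᵥ f) 1` has a solution `h`. The increments then telescope:
`u_k - u_2 - (k - 2) u_0 = ⟨q P, h⟩ - ⟨q P^(k-1), h⟩`, which is at most `2 ‖h‖` in absolute value.
-/

open Finset

/-- Product of the entries of `A` along a word `σ` of length `k+1`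
(encoded as a function `Fin (k+1) → Fin N`). -/
noncomputable def wprod {N k : ℕ} (A : Matrix (Fin N) (Fin N) ℝ)
    (σ : Fin (k + 1) → Fin N) : ℝ :=
  ∏ t : Fin k, A (σ t.castSucc) (σ t.succ)

/-- `u_k = ∑_{σ ∈ G_k} m_σ log m_σ` with `m_σ = q_{σ_1} p_σ`; the sum runs over all
words of length `k` (non-admissible words contribute `0`, convention `0 log 0 = 0`). -/
noncomputable def useq {N : ℕ} (q : Fin N → ℝ) (P : Matrix (Fin N) (Fin N) ℝ)
    (k : ℕ) : ℝ :=
  ∑ σ : Fin (k - 1 + 1) → Fin N,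
    (q (σ 0) * wprod P σ) * Real.log (q (σ 0) * wprod P σ)

/-- `l_k = ∑_{σ ∈ G_k} m_σ log c_σ`. -/
noncomputable def lseq {N : ℕ} (q : Fin N → ℝ) (P c : Matrix (Fin N) (Fin N) ℝ)
    (k : ℕ) : ℝ :=
  ∑ σ : Fin (k - 1 + 1) → Fin N,
    (q (σ 0) * wprod P σ) * Real.log (wprod c σ)

open Matrix

section Words

variable {N : ℕ}

theorem sum_eq_sum_sum_snoc {n : ℕ} (F : (Fin (n + 2) → Fin N) → ℝ) :
    ∑ σ, F σ = ∑ σ : Fin (n + 1) → Fin N, ∑ j, F (Fin.snoc σ j) := by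
  rw [← (Fin.snocEquiv fun _ => Fin N).sum_comp, Fintype.sum_prod_type_right]
  rfl

theorem snoc_apply_zero {n : ℕ} (σ : Fin (n + 1) → Fin N) (j : Fin N) :
    (Fin.snoc σ j : Fin (n + 2) → Fin N) 0 = σ 0 :=
  Fin.snoc_castSucc (α := fun _ => Fin N) j σ 0

theorem wprod_snoc {n : ℕ} (A : Matrix (Fin N) (Fin N) ℝ) (σ : Fin (n + 1) → Fin N)
    (j : Fin N) :
    wprod A (Fin.snoc σ j : Fin (n + 2) → Fin N) = wprod A σ * A (σ (Fin.last n)) j := by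
  simp only [wprod, Fin.prod_univ_castSucc, Fin.succ_castSucc, Fin.snoc_castSucc,
    Fin.succ_last, Fin.snoc_last]

theorem wprod_ne_zero {n : ℕ} {P A : Matrix (Fin N) (Fin N) ℝ}
    (hA : ∀ i j, P i j ≠ 0 → A i j ≠ 0) {σ : Fin (n + 1) → Fin N} (hσ : wprod P σ ≠ 0) :
    wprod A σ ≠ 0 := by
  rw [wprod, prod_ne_zero_iff] at hσ ⊢
  exact fun t ht => hA _ _ (hσ t ht)

theorem sum_mul_wprod_mul_last (q : Fin N → ℝ) (P : Matrix (Fin N) (Fin N) ℝ) (n : ℕ)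
    (g : Fin N → ℝ) :
    ∑ σ : Fin (n + 1) → Fin N, q (σ 0) * wprod P σ * g (σ (Fin.last n)) = (q ᵥ* P ^ n) ⬝ᵥ g := by
  induction n generalizing g with
  | zero =>
    rw [← (Equiv.funUnique (Fin 1) (Fin N)).symm.sum_comp]
    simp [wprod, dotProduct]
  | succ n ih =>
    rw [sum_eq_sum_sum_snoc]
    simp_rw [snoc_apply_zero, wprod_snoc, Fin.snoc_last]
    calc _ = ∑ σ : Fin (n + 1) → Fin N, q (σ 0) * wprod P σ * (P *ᵥ g) (σ (Fin.last n)) := by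
          simp_rw [mulVec, dotProduct, mul_sum, mul_assoc]
      _ = _ := by rw [ih, dotProduct_mulVec, vecMul_vecMul, pow_succ]

theorem mul_mul_log_mul {m p x y : ℝ} (hx : m ≠ 0 → x ≠ 0) (hy : p ≠ 0 → y ≠ 0) :
    m * p * Real.log (x * y) = p * (m * Real.log x) + m * (p * Real.log y) := by
  rcases eq_or_ne m 0 with rfl | hm
  · simp
  rcases eq_or_ne p 0 with rfl | hp
  · simp
  rw [Real.log_mul (hx hm) (hy hp)]
  ring

theorem sum_mul_log_wprod_succ (q a : Fin N → ℝ) (P A : Matrix (Fin N) (Fin N) ℝ)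
    (hrow : ∀ i, ∑ j, P i j = 1) (ha : ∀ i, q i ≠ 0 → a i ≠ 0)
    (hA : ∀ i j, P i j ≠ 0 → A i j ≠ 0) (n : ℕ) :
    ∑ σ : Fin (n + 2) → Fin N, q (σ 0) * wprod P σ * Real.log (a (σ 0) * wprod A σ)
      = ∑ σ : Fin (n + 1) → Fin N, q (σ 0) * wprod P σ * Real.log (a (σ 0) * wprod A σ)
        + (q ᵥ* P ^ n) ⬝ᵥ fun i => ∑ j, P i j * Real.log (A i j) := by
  rw [sum_eq_sum_sum_snoc, ← sum_mul_wprod_mul_last, ← sum_add_distrib]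
  refine sum_congr rfl fun σ _ => ?_
  have hx : q (σ 0) * wprod P σ ≠ 0 → a (σ 0) * wprod A σ ≠ 0 := fun h =>
    mul_ne_zero (ha _ (left_ne_zero_of_mul h)) (wprod_ne_zero hA (right_ne_zero_of_mul h))
  simp_rw [snoc_apply_zero, wprod_snoc, ← mul_assoc, mul_mul_log_mul hx (hA _ _),
    sum_add_distrib, ← sum_mul, ← mul_sum, hrow, one_mul]

theorem useq_add_two (q : Fin N → ℝ) (P : Matrix (Fin N) (Fin N) ℝ)
    (hrow : ∀ i, ∑ j, P i j = 1) (n : ℕ) :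
    useq q P (n + 2)
      = useq q P (n + 1) + (q ᵥ* P ^ n) ⬝ᵥ fun i => ∑ j, P i j * Real.log (P i j) :=
  sum_mul_log_wprod_succ q q P P hrow (fun _ => id) (fun _ _ => id) n

theorem lseq_add_two (q : Fin N → ℝ) (P c : Matrix (Fin N) (Fin N) ℝ)
    (hrow : ∀ i, ∑ j, P i j = 1) (hc : ∀ i j, P i j ≠ 0 → c i j ≠ 0) (n : ℕ) :
    lseq q P c (n + 2)
      = lseq q P c (n + 1) + (q ᵥ* P ^ n) ⬝ᵥ fun i => ∑ j, P i j * Real.log (c i j) := by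
  have h := sum_mul_log_wprod_succ q 1 P c hrow (fun _ _ => one_ne_zero) hc n
  simp only [Pi.one_apply, one_mul] at h
  exact h

end Words

section Markov

theorem abs_dotProduct_le_norm_of_mem_stdSimplex {ι : Type*} [Fintype ι] {x : ι → ℝ}
    (hx : x ∈ stdSimplex ℝ ι) (h : ι → ℝ) : |x ⬝ᵥ h| ≤ ‖h‖ :=
  calc |x ⬝ᵥ h| ≤ ∑ i, |x i * h i| := abs_sum_le_sum_abs _ _
    _ ≤ ∑ i, x i * ‖h‖ := sum_le_sum fun i _ => by
        rw [abs_mul, abs_of_nonneg (hx.1 i)]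
        exact mul_le_mul_of_nonneg_left (norm_le_pi_norm h i) (hx.1 i)
    _ = ‖h‖ := by rw [← sum_mul, hx.2, one_mul]

variable {ι : Type*} [Fintype ι] [DecidableEq ι] {P : Matrix ι ι ℝ}

theorem pow_mulVec_eq_self {h : ι → ℝ} (hh : P *ᵥ h = h) (m : ℕ) : (P ^ m) *ᵥ h = h := by
  induction m with
  | zero => simp
  | succ m ih => rw [pow_succ, ← mulVec_mulVec, hh, ih]

/-- Maximum principle: the defect `h i₀ - h` at a maximiser `i₀` is a nonnegative harmonic
vector vanishing at `i₀`, hence vanishing wherever some power of `P` leads from `i₀`. -/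
theorem Matrix.IsIrreducible.eq_of_mulVec_eq_self (hP : P ∈ rowStochastic ℝ ι)
    (hirr : P.IsIrreducible) {h : ι → ℝ} (hh : P *ᵥ h = h) (i j : ι) : h i = h j := by
  have : Nonempty ι := ⟨i⟩
  obtain ⟨i₀, hi₀⟩ := Finite.exists_max h
  suffices key : ∀ j, h j = h i₀ by rw [key i, key j]
  intro j
  set z : ι → ℝ := h i₀ • 1 - h
  have hz_nonneg : ∀ k, 0 ≤ z k := fun k => by simpa [z] using hi₀ k
  have hz : P *ᵥ z = z := by
    rw [mulVec_sub, mulVec_smul, one_vecMul_of_mem_rowStochastic hP, hh]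
  obtain ⟨m, -, hm⟩ := (isIrreducible_iff_exists_pow_pos hirr.nonneg).1 hirr i₀ j
  have hsum : ∑ k, (P ^ m) i₀ k * z k = 0 := by
    have := congrFun (pow_mulVec_eq_self hz m) i₀
    simpa [z, mulVec, dotProduct] using this
  have hterm := (sum_eq_zero_iff_of_nonneg fun k _ =>
    mul_nonneg (pow_apply_nonneg hirr.nonneg m i₀ k) (hz_nonneg k)).1 hsum j (mem_univ j)
  have : z j = 0 := (mul_eq_zero.1 hterm).resolve_left hm.ne'
  simpa [z, sub_eq_zero, eq_comm] using this

theorem Matrix.IsIrreducible.ker_one_sub_le_span_one (hP : P ∈ rowStochastic ℝ ι)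
    (hirr : P.IsIrreducible) :
    LinearMap.ker (toLin' (1 - P)) ≤ Submodule.span ℝ {1} := by
  intro h hh
  rw [LinearMap.mem_ker, toLin'_apply, sub_mulVec, one_mulVec, sub_eq_zero] at hh
  rcases isEmpty_or_nonempty ι with _ | ⟨⟨i₀⟩⟩
  · exact Submodule.mem_span_singleton.2 ⟨0, Subsingleton.elim _ _⟩
  · refine Submodule.mem_span_singleton.2 ⟨h i₀, funext fun j => ?_⟩
    simp [hirr.eq_of_mulVec_eq_self hP hh.symm i₀ j]

/-- Solvability of the Poisson equation: `1 - P` has corank one, so its range is the whole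
kernel of the stationary functional `v ⬝ᵥ ·`. -/
theorem Matrix.IsIrreducible.exists_eq_sub_mulVec_add (hP : P ∈ rowStochastic ℝ ι)
    (hirr : P.IsIrreducible) {v : ι → ℝ} (hv : v ᵥ* P = v) (hv1 : ∑ i, v i = 1)
    (f : ι → ℝ) : ∃ h, f = h - P *ᵥ h + (v ⬝ᵥ f) • 1 := by
  set T := toLin' (1 - P)
  set φ := dotProductBilin ℝ ℝ v
  have hT : ∀ h, T h = h - P *ᵥ h := fun h => by
    rw [toLin'_apply, sub_mulVec, one_mulVec]
  have hrange_le : LinearMap.range T ≤ LinearMap.ker φ := by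
    rintro _ ⟨h, rfl⟩
    rw [LinearMap.mem_ker, hT, dotProductBilin_apply_apply, dotProduct_sub, dotProduct_mulVec,
      hv, sub_self]
  have hφ_one : φ 1 = 1 := by simp [φ, dotProduct_one, hv1]
  have hker_ne : LinearMap.ker φ ≠ ⊤ := fun htop => by
    have := LinearMap.mem_ker.1 (htop ▸ Submodule.mem_top : (1 : ι → ℝ) ∈ LinearMap.ker φ)
    simp [hφ_one] at this
  have hkerT : Module.finrank ℝ (LinearMap.ker T) ≤ 1 :=
    (Submodule.finrank_mono (hirr.ker_one_sub_le_span_one hP)).trans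
      (by simpa using finrank_span_le_card ({1} : Set (ι → ℝ)))
  have hrank := LinearMap.finrank_range_add_finrank_ker T
  have hkerφ := Submodule.finrank_lt hker_ne
  have hrange : LinearMap.range T = LinearMap.ker φ :=
    Submodule.eq_of_le_of_finrank_le hrange_le (by omega)
  obtain ⟨h, hh⟩ : f - (v ⬝ᵥ f) • 1 ∈ LinearMap.range T := by
    rw [hrange, LinearMap.mem_ker, dotProductBilin_apply_apply, dotProduct_sub,
      dotProduct_smul, dotProduct_one, hv1, smul_eq_mul, mul_one, sub_self]
  exact ⟨h, by rw [← hT, hh, sub_add_cancel]⟩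

theorem vecMul_mem_stdSimplex (hP : P ∈ rowStochastic ℝ ι) {x : ι → ℝ}
    (hx : x ∈ stdSimplex ℝ ι) : x ᵥ* P ∈ stdSimplex ℝ ι := by
  refine ⟨nonneg_vecMul_of_mem_rowStochastic hP hx.1, ?_⟩
  rw [← dotProduct_one,
    vecMul_dotProduct_one_eq_one_rowStochastic hP (by rw [dotProduct_one, hx.2])]

theorem vecMul_pow_dotProduct_sub_mulVec_add (hP : P ∈ rowStochastic ℝ ι) {x : ι → ℝ}
    (hx : x ∈ stdSimplex ℝ ι) (h : ι → ℝ) (c : ℝ) (m : ℕ) :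
    (x ᵥ* P ^ m) ⬝ᵥ (h - P *ᵥ h + c • 1)
      = (x ᵥ* P ^ m) ⬝ᵥ h - (x ᵥ* P ^ (m + 1)) ⬝ᵥ h + c := by
  have hxm : (x ᵥ* P ^ m) ⬝ᵥ 1 = 1 := by
    rw [dotProduct_one]; exact (vecMul_mem_stdSimplex (pow_mem hP m) hx).2
  rw [dotProduct_add, dotProduct_sub, dotProduct_mulVec, vecMul_vecMul, ← pow_succ,
    dotProduct_smul, hxm, smul_eq_mul, mul_one]

theorem abs_sub_linear_le_of_increments (hP : P ∈ rowStochastic ℝ ι) {x : ι → ℝ}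
    (hx : x ∈ stdSimplex ℝ ι) {f h : ι → ℝ} {c : ℝ} (hf : f = h - P *ᵥ h + c • 1)
    {u : ℕ → ℝ} (hu : ∀ m, u (m + 1) = u m + (x ᵥ* P ^ m) ⬝ᵥ f) (n : ℕ) :
    |u n - (u 0 + n * c)| ≤ 2 * ‖h‖ := by
  have htel : u n - (u 0 + n * c) = (x ᵥ* P ^ 0) ⬝ᵥ h - (x ᵥ* P ^ n) ⬝ᵥ h := by
    induction n with
    | zero => simp
    | succ n ih =>
      rw [hu, hf, vecMul_pow_dotProduct_sub_mulVec_add hP hx]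
      push_cast
      linarith
  have hbound : ∀ m, |(x ᵥ* P ^ m) ⬝ᵥ h| ≤ ‖h‖ := fun m =>
    abs_dotProduct_le_norm_of_mem_stdSimplex (vecMul_mem_stdSimplex (pow_mem hP m) hx) h
  rw [htel, two_mul]
  exact (abs_sub _ _).trans (add_le_add (hbound 0) (hbound n))

theorem Matrix.IsIrreducible.exists_abs_sub_linear_le (hP : P ∈ rowStochastic ℝ ι)
    (hirr : P.IsIrreducible) {v : ι → ℝ} (hv : v ᵥ* P = v) (hv1 : ∑ i, v i = 1) {x : ι → ℝ}
    (hx : x ∈ stdSimplex ℝ ι) (f : ι → ℝ) {u : ℕ → ℝ}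
    (hu : ∀ m, u (m + 1) = u m + (x ᵥ* P ^ m) ⬝ᵥ f) :
    ∃ δ > 0, ∀ n : ℕ, |u n - (u 0 + n * (v ⬝ᵥ f))| ≤ δ := by
  obtain ⟨h, hf⟩ := hirr.exists_eq_sub_mulVec_add hP hv hv1 f
  exact ⟨2 * ‖h‖ + 1, by positivity, fun n =>
    (abs_sub_linear_le_of_increments hP hx hf hu n).trans (le_add_of_nonneg_right zero_le_one)⟩

end Markov

theorem stmt5_general {N : ℕ} (P c : Matrix (Fin N) (Fin N) ℝ)
    (hnn : ∀ i j, 0 ≤ P i j) (hrow : ∀ i, ∑ j, P i j = 1)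
    (hirr : ∀ i j, ∃ m, 1 ≤ m ∧ 0 < (P ^ m) i j)
    (hc : ∀ i j, 0 < P i j → 0 < c i j ∧ c i j < 1)
    (q : Fin N → ℝ) (hq : ∀ i, 0 < q i) (hq1 : ∑ i, q i = 1)
    (v : Fin N → ℝ) (hv1 : ∑ i, v i = 1)
    (hveig : ∀ j, ∑ i, v i * P i j = v j)
    (u0 l0 : ℝ)
    (hu0 : u0 = ∑ i, v i * ∑ j, P i j * Real.log (P i j))
    (hl0 : l0 = ∑ i, v i * ∑ j, P i j * Real.log (c i j)) :
    ∃ δ0 δ3 : ℝ, 0 < δ0 ∧ 0 < δ3 ∧ ∀ k : ℕ, 3 ≤ k →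
      |useq q P k - (useq q P 2 + ((k : ℝ) - 2) * u0)| ≤ δ0 ∧
      |lseq q P c k - (lseq q P c 2 + ((k : ℝ) - 2) * l0)| ≤ δ3 := by
  have hP : P ∈ rowStochastic ℝ (Fin N) := mem_rowStochastic_iff_sum.2 ⟨hnn, hrow⟩
  have hP_irr : P.IsIrreducible := (isIrreducible_iff_exists_pow_pos hnn).2 hirr
  have hc_ne : ∀ i j, P i j ≠ 0 → c i j ≠ 0 := fun i j h =>
    (hc i j ((hnn i j).lt_of_ne' h)).1.ne'
  have hqP : q ᵥ* P ∈ stdSimplex ℝ (Fin N) :=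
    vecMul_mem_stdSimplex hP ⟨fun i => (hq i).le, hq1⟩
  have h_shift : ∀ m, q ᵥ* P ^ (m + 1) = (q ᵥ* P) ᵥ* P ^ m := fun m => by
    rw [vecMul_vecMul, pow_succ']
  obtain ⟨δ0, hδ0, hu⟩ := hP_irr.exists_abs_sub_linear_le hP (funext hveig) hv1 hqP _
    (u := fun m => useq q P (m + 2)) fun m => by rw [← h_shift]; exact useq_add_two q P hrow _
  obtain ⟨δ3, hδ3, hl⟩ := hP_irr.exists_abs_sub_linear_le hP (funext hveig) hv1 hqP _
    (u := fun m => lseq q P c (m + 2)) fun m => by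
      rw [← h_shift]; exact lseq_add_two q P c hrow hc_ne _
  refine ⟨δ0, δ3, hδ0, hδ3, fun k hk => ?_⟩
  obtain ⟨n, rfl⟩ : ∃ n, k = n + 2 := ⟨k - 2, by omega⟩
  rw [show ((n + 2 : ℕ) : ℝ) - 2 = n by push_cast; ring, hu0, hl0]
  exact ⟨hu n, hl n⟩

theorem stmt5 {N : ℕ} (P c : Matrix (Fin N) (Fin N) ℝ)
    (hnn : ∀ i j, 0 ≤ P i j) (hrow : ∀ i, ∑ j, P i j = 1)
    (hirr : ∀ i j, ∃ m, 1 ≤ m ∧ 0 < (P ^ m) i j)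
    (hc : ∀ i j, 0 < P i j → 0 < c i j ∧ c i j < 1)
    (hc0 : ∀ i j, P i j = 0 → c i j = 0)
    (q : Fin N → ℝ) (hq : ∀ i, 0 < q i) (hq1 : ∑ i, q i = 1)
    (v : Fin N → ℝ) (hvpos : ∀ i, 0 < v i) (hv1 : ∑ i, v i = 1)
    (hveig : ∀ j, ∑ i, v i * P i j = v j)
    (u0 l0 : ℝ)
    (hu0 : u0 = ∑ i, v i * ∑ j, P i j * Real.log (P i j))
    (hl0 : l0 = ∑ i, v i * ∑ j, P i j * Real.log (c i j)) :
    ∃ δ0 δ3 : ℝ, 0 < δ0 ∧ 0 < δ3 ∧ ∀ k : ℕ, 3 ≤ k →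
      |useq q P k - (useq q P 2 + ((k : ℝ) - 2) * u0)| ≤ δ0 ∧
      |lseq q P c k - (lseq q P c 2 + ((k : ℝ) - 2) * l0)| ≤ δ3 :=
  stmt5_general P c hnn hrow hirr hc q hq hq1 v hv1 hveig u0 l0 hu0 hl0
end

section
/- Let ν be a Borel probability measure on ℝ^q with compact support K, and suppose there exist d_1, d_2 > 0 with sup_{x∈ℝ^q} ν(B(x,ε)) ≤ d_1 ε^{d_2} for all ε > 0. Let ê_n(ν) := log e_{n,0}(ν) where e_{n,0}(ν) := inf over sets α of at most n points of exp ∫ log d(x,α) dν(x). Then for any p, q' > 1 with 1/p + 1/q' = 1 and every n ≥ 1, ê_n(ν) − ê_{n+1}(ν) ≤ (n+1)^{-1} log(3|K|) + d_1^{1/q'} q' d_2^{-1} (n+1)^{-1/p}, where |K| is the diameter of K. -/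
open MeasureTheory Filter

/-- The `n`-th geometric mean quantization error
`e_{n,0}(ν) = inf_{1 ≤ card α ≤ n} exp ∫ log d(x,α) dν(x)`. -/
noncomputable def geErr {E : Type*} [NormedAddCommGroup E] [MeasurableSpace E]
    (n : ℕ) (ν : Measure E) : ℝ :=
  sInf ((fun α : Finset E => Real.exp (∫ x, Real.log (Metric.infDist x ↑α) ∂ν)) ''
    {α : Finset E | α.Nonempty ∧ α.card ≤ n})

/-- `ê_n(ν) = log e_{n,0}(ν)`. -/
noncomputable def hatE {E : Type*} [NormedAddCommGroup E] [MeasurableSpace E]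
    (n : ℕ) (ν : Measure E) : ℝ :=
  Real.log (geErr n ν)


/-!
Take a near-optimal codebook for `n + 1` points, retract its points far from `K` onto a point
`c ∈ K` and pad it, inside `closedBall c (2 |K|)`, to a set `β` of exactly `n + 1` points; this
is possible because the ball condition forbids atoms, so `K` is infinite. Each `β \ {a}` is an
`n`-point codebook, and for `x ∈ K \ β` removing a point other than the nearest one does not
change `d(x, β)`, while removing the nearest one leaves a point at distance at most `3 |K|`.
Averaging over `a` gives `(n + 1) ê_n ≤ n ∫ log d(x, β) dν + log (3 |K|)`. The remaining term
`-∫ log d(x, β) dν` is at most `∫ log⁻ d(x, β) dν`, which the layer-cake formula bounds using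
`ν (log⁻ d(·, β) > t) ≤ min 1 ((n + 1) d₁ e^{-d₂ t}) ≤ ((n + 1) d₁)^{1/q'} e^{-d₂ t / q'}`.
-/

open Metric

section MeasureTheory

variable {X : Type*} [MeasurableSpace X] {μ : Measure X}

theorem integrable_and_integral_le_of_measure_lt_le_exp {F : X → ℝ} (hFm : AEMeasurable F μ)
    (hF : 0 ≤ᵐ[μ] F) {C c : ℝ} (hC : 0 ≤ C) (hc : 0 < c)
    (htail : ∀ t : ℝ, 0 < t → μ {x | t < F x} ≤ ENNReal.ofReal (C * Real.exp (-(c * t)))) :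
    Integrable F μ ∧ ∫ x, F x ∂μ ≤ C / c := by
  have hexp : ∫ t in Set.Ioi (0 : ℝ), C * Real.exp (-(c * t)) = C / c := by
    have := integral_comp_mul_left_Ioi (fun t => Real.exp (-t)) 0 hc
    simp only [mul_zero, integral_exp_neg_Ioi, neg_zero, Real.exp_zero, smul_eq_mul,
      mul_one] at this
    rw [integral_const_mul, this, div_eq_mul_inv]
  have hint : IntegrableOn (fun t => C * Real.exp (-(c * t))) (Set.Ioi 0) := by
    simpa only [IntegrableOn, neg_mul] using (exp_neg_integrableOn_Ioi 0 hc).const_mul C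
  have hlin : ∫⁻ x, ENNReal.ofReal (F x) ∂μ ≤ ENNReal.ofReal (C / c) :=
    calc ∫⁻ x, ENNReal.ofReal (F x) ∂μ = ∫⁻ t in Set.Ioi 0, μ {x | t < F x} :=
          lintegral_eq_lintegral_meas_lt μ hF hFm
      _ ≤ ∫⁻ t in Set.Ioi 0, ENNReal.ofReal (C * Real.exp (-(c * t))) :=
          setLIntegral_mono (by fun_prop) htail
      _ = ENNReal.ofReal (C / c) := by
          rw [← ofReal_integral_eq_lintegral_ofReal hint
            (Eventually.of_forall fun t => by positivity), hexp]
  have hFi : Integrable F μ :=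
    (lintegral_ofReal_ne_top_iff_integrable hFm.aestronglyMeasurable hF).1
      (ne_top_of_le_ne_top ENNReal.ofReal_ne_top hlin)
  refine ⟨hFi, ?_⟩
  rw [integral_eq_lintegral_of_nonneg_ae hF hFm.aestronglyMeasurable]
  exact ENNReal.toReal_le_of_le_ofReal (by positivity) hlin

theorem neg_integral_negPart_le_integral {f : X → ℝ} (hf : Integrable (fun x => (f x)⁻) μ) :
    -∫ x, (f x)⁻ ∂μ ≤ ∫ x, f x ∂μ := by
  by_cases hfi : Integrable f μ
  · rw [← integral_neg]
    exact integral_mono hf.neg hfi fun x => neg_le.mp (neg_le_negPart (f x))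
  · rw [integral_undef hfi, neg_nonpos]
    exact integral_nonneg fun x => negPart_nonneg _

theorem integrable_log_of_ae_le [IsFiniteMeasure μ] {f : X → ℝ}
    (hfm : AEStronglyMeasurable (fun x => Real.log (f x)) μ) (hf0 : ∀ x, 0 ≤ f x) {M : ℝ}
    (hfM : ∀ᵐ x ∂μ, f x ≤ M) (hneg : Integrable (fun x => (Real.log (f x))⁻) μ) :
    Integrable (fun x => Real.log (f x)) μ := by
  refine ((integrable_const |Real.log M|).add hneg).mono' hfm ?_
  filter_upwards [hfM] with x hx
  rw [Real.norm_eq_abs, Pi.add_apply]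
  rcases (hf0 x).eq_or_lt with h0 | hpos
  · simp [← h0]
  rcases le_or_gt 0 (Real.log (f x)) with hlog | hlog
  · rw [abs_of_nonneg hlog]
    have := Real.log_le_log hpos hx
    linarith [le_abs_self (Real.log M), negPart_nonneg (Real.log (f x))]
  · rw [abs_of_neg hlog, negPart_eq_neg.mpr hlog.le]
    linarith [abs_nonneg (Real.log M)]

theorem min_one_le_rpow {y r : ℝ} (hy : 0 ≤ y) (hr0 : 0 < r) (hr1 : r ≤ 1) :
    min 1 y ≤ y ^ r := by
  rcases le_total 1 y with h | h
  · exact (min_le_left _ _).trans (Real.one_le_rpow h hr0.le)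
  · rcases hy.eq_or_lt with h0 | h0
    · simp [← h0, Real.zero_rpow hr0.ne']
    · exact (min_le_right _ _).trans (Real.self_le_rpow_of_le_one h0.le h hr1)

theorem infinite_of_measure_compl_eq_zero [NullSingletonClass μ] [NeZero μ] {s : Set X}
    (hs : μ sᶜ = 0) : s.Infinite := fun hfin =>
  let ⟨_, hx, hx'⟩ :=
    ((ae_iff.mpr hs).and (measure_eq_zero_iff_ae_notMem.mp (hfin.measure_zero μ))).exists
  hx' hx

end MeasureTheory

theorem Set.Infinite.exists_finset_superset_card_eq {α : Type*} {s : Set α}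
    (hs : s.Infinite) {t : Finset α} (hts : ↑t ⊆ s) {n : ℕ} (hn : t.card ≤ n) :
    ∃ u : Finset α, t ⊆ u ∧ ↑u ⊆ s ∧ u.card = n := by
  classical
  obtain ⟨t', ht's, ht'card⟩ := (hs.sdiff t.finite_toSet).exists_subset_card_eq (n - t.card)
  have hdisj : Disjoint t t' :=
    Finset.disjoint_right.mpr fun a ha hat => (ht's ha).2 hat
  refine ⟨t ∪ t', Finset.subset_union_left, ?_, ?_⟩
  · rw [Finset.coe_union]
    exact Set.union_subset hts (ht's.trans Set.sdiff_subset)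
  · rw [Finset.card_union_of_disjoint hdisj, ht'card]
    omega

section PseudoMetric

variable {E : Type*} [PseudoMetricSpace E]

theorem Finset.exists_infDist_eq_dist {α : Finset E} (hα : α.Nonempty) (x : E) :
    ∃ a ∈ α, infDist x α = dist x a := by
  simpa using α.finite_toSet.isCompact.exists_infDist_eq_dist (by simpa using hα) x

theorem exists_subset_closedBall_card_le_infDist_le {K : Set E}
    (hK : Bornology.IsBounded K) {c : E} (hc : c ∈ K) {γ : Finset E} (hγ : γ.Nonempty) :
    ∃ γ' : Finset E, γ'.Nonempty ∧ γ'.card ≤ γ.card ∧ ↑γ' ⊆ closedBall c (2 * diam K) ∧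
      ∀ x ∈ K, infDist x γ' ≤ infDist x γ := by
  classical
  let f : E → E := fun a => if a ∈ closedBall c (2 * diam K) then a else c
  have hf : ∀ x ∈ K, ∀ a, dist x (f a) ≤ dist x a := by
    intro x hx a
    by_cases ha : a ∈ closedBall c (2 * diam K)
    · simp only [f, if_pos ha, le_refl]
    · simp only [f, if_neg ha]
      rw [mem_closedBall, not_le] at ha
      linarith [dist_le_diam_of_mem hK hx hc, dist_triangle a x c, dist_comm a x]
  refine ⟨γ.image f, hγ.image f, Finset.card_image_le, ?_, ?_⟩
  · intro b hb
    obtain ⟨a, -, rfl⟩ := Finset.mem_image.mp (by simpa using hb)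
    by_cases ha : a ∈ closedBall c (2 * diam K)
    · simpa only [f, if_pos ha] using ha
    · simp only [f, if_neg ha]
      exact mem_closedBall_self (by positivity)
  · intro x hx
    obtain ⟨a, ha, hnear⟩ := Finset.exists_infDist_eq_dist hγ x
    rw [hnear]
    exact (infDist_le_dist_of_mem (Finset.mem_coe.mpr (Finset.mem_image_of_mem f ha))).trans
      (hf x hx a)

theorem exists_card_eq_subset_closedBall_infDist_le {K : Set E} (hK : Bornology.IsBounded K)
    (hKinf : K.Infinite) {c : E} (hc : c ∈ K) {γ : Finset E} (hγ : γ.Nonempty) {m : ℕ}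
    (hγm : γ.card ≤ m) :
    ∃ β : Finset E, β.card = m ∧ ↑β ⊆ closedBall c (2 * diam K) ∧
      ∀ x ∈ K, infDist x β ≤ infDist x γ := by
  obtain ⟨γ', hγ', hcard, hsub, hle⟩ := exists_subset_closedBall_card_le_infDist_le hK hc hγ
  have hball : (closedBall c (2 * diam K)).Infinite :=
    hKinf.mono fun x hx => mem_closedBall.mpr (by
      linarith [dist_le_diam_of_mem hK hx hc, diam_nonneg (s := K)])
  obtain ⟨β, hγ'β, hβ, hβm⟩ := hball.exists_finset_superset_card_eq hsub (hcard.trans hγm)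
  exact ⟨β, hβm, hβ, fun x hx =>
    (infDist_le_infDist_of_subset (by simpa using hγ'β) (by simpa using hγ')).trans (hle x hx)⟩

end PseudoMetric

section Metric

variable {E : Type*} [MetricSpace E]

theorem Finset.infDist_pos {α : Finset E} (hα : α.Nonempty) {x : E} (hx : x ∉ α) :
    0 < infDist x α :=
  (α.finite_toSet.isClosed.notMem_iff_infDist_pos (by simpa using hα)).mp (by simpa using hx)

theorem sum_log_infDist_erase_le [DecidableEq E] {β : Finset E} (hβ : 1 < β.card) {x : E}
    (hx : x ∉ β) {R : ℝ} (hR : ∀ b ∈ β, dist x b ≤ R) :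
    ∑ a ∈ β, Real.log (infDist x (β.erase a)) ≤
      ((β.card : ℝ) - 1) * Real.log (infDist x β) + Real.log R := by
  obtain ⟨a₀, ha₀, hnear⟩ :=
    Finset.exists_infDist_eq_dist (Finset.card_pos.mp (by omega : 0 < β.card)) x
  have herase : ∀ a ∈ β.erase a₀, infDist x (β.erase a) = infDist x β := by
    intro a ha
    have ha₀' : a₀ ∈ β.erase a := Finset.mem_erase.mpr ⟨(Finset.ne_of_mem_erase ha).symm, ha₀⟩
    refine le_antisymm ?_ (infDist_le_infDist_of_subset (by simp) ⟨a₀, ha₀'⟩)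
    exact hnear ▸ infDist_le_dist_of_mem (Finset.mem_coe.mpr ha₀')
  have hne : (β.erase a₀).Nonempty :=
    Finset.card_pos.mp (by rw [Finset.card_erase_of_mem ha₀]; omega)
  have hlast : Real.log (infDist x (β.erase a₀)) ≤ Real.log R := by
    obtain ⟨b, hb⟩ := hne
    refine Real.log_le_log
      (Finset.infDist_pos ⟨b, hb⟩ fun h => hx (Finset.mem_of_mem_erase h)) ?_
    exact (infDist_le_dist_of_mem (Finset.mem_coe.mpr hb)).trans
      (hR b (Finset.mem_of_mem_erase hb))
  rw [← Finset.sum_erase_add β _ ha₀, Finset.sum_congr rfl fun a ha => by rw [herase a ha],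
    Finset.sum_const, Finset.card_erase_of_mem ha₀, nsmul_eq_mul, Nat.cast_pred (by omega)]
  linarith

end Metric

def BallMassBound {E : Type*} [PseudoMetricSpace E] [MeasurableSpace E] (ν : Measure E)
    (d1 d2 : ℝ) : Prop :=
  ∀ (x : E) (ε : ℝ), 0 < ε → (ν (closedBall x ε)).toReal ≤ d1 * ε ^ d2

namespace BallMassBound

open Topology

variable {E : Type*} [PseudoMetricSpace E] [MeasurableSpace E] {ν : Measure E} {d1 d2 : ℝ}

theorem nullSingletonClass [IsFiniteMeasure ν] (h : BallMassBound ν d1 d2) (hd2 : 0 < d2) :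
    NullSingletonClass ν where
  measure_singleton a := by
    have hlim : Tendsto (fun ε : ℝ => d1 * ε ^ d2) (𝓝[>] 0) (𝓝 0) := by
      have := ((Real.continuous_rpow_const hd2.le).tendsto 0).const_mul d1
      rw [Real.zero_rpow hd2.ne', mul_zero] at this
      exact this.mono_left nhdsWithin_le_nhds
    have hle : (ν {a}).toReal ≤ 0 := ge_of_tendsto hlim <|
      eventually_nhdsWithin_of_forall fun ε (hε : 0 < ε) =>
        (ENNReal.toReal_mono (measure_ne_top _ _) (measure_mono
          (Set.singleton_subset_iff.mpr (mem_closedBall_self hε.le)))).trans (h a ε hε)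
    exact ((ENNReal.toReal_eq_zero_iff _).mp (le_antisymm hle ENNReal.toReal_nonneg)).resolve_right
      (measure_ne_top _ _)

theorem measure_lt_negPart_log_infDist_le [IsFiniteMeasure ν] (h : BallMassBound ν d1 d2)
    (hd1 : 0 ≤ d1) {α : Finset E} (hα : α.Nonempty) {t : ℝ} (ht : 0 < t) :
    ν {x | t < (Real.log (infDist x α))⁻} ≤
      ENNReal.ofReal (α.card * d1 * Real.exp (-(d2 * t))) := by
  have hsub : {x | t < (Real.log (infDist x α))⁻} ⊆ ⋃ a ∈ α, closedBall a (Real.exp (-t)) := by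
    intro x hx
    have hlt : infDist x α < Real.exp (-t) := by
      rcases (infDist_nonneg (x := x) (s := (α : Set E))).eq_or_lt with h0 | hpos
      · exact h0 ▸ Real.exp_pos _
      · rw [Set.mem_ofPred_eq, negPart_def, lt_max_iff] at hx
        exact (Real.log_lt_iff_lt_exp hpos).mp (by linarith [hx.resolve_right ht.le.not_gt])
    obtain ⟨a, ha, hnear⟩ := Finset.exists_infDist_eq_dist hα x
    exact Set.mem_biUnion ha (mem_closedBall.mpr (hnear ▸ hlt.le))
  calc ν {x | t < (Real.log (infDist x α))⁻}
      ≤ ∑ a ∈ α, ν (closedBall a (Real.exp (-t))) :=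
        (measure_mono hsub).trans (measure_biUnion_finset_le _ _)
    _ ≤ ∑ _a ∈ α, ENNReal.ofReal (d1 * Real.exp (-(d2 * t))) := by
        refine Finset.sum_le_sum fun a _ => ?_
        rw [ENNReal.le_ofReal_iff_toReal_le (measure_ne_top _ _) (by positivity)]
        convert h a _ (Real.exp_pos _) using 2
        rw [← Real.exp_mul]
        ring_nf
    _ = ENNReal.ofReal (α.card * d1 * Real.exp (-(d2 * t))) := by
        rw [Finset.sum_const, nsmul_eq_mul, ← ENNReal.ofReal_natCast,
          ← ENNReal.ofReal_mul (by positivity), mul_assoc]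

variable [BorelSpace E]

theorem integral_negPart_log_infDist_le [IsProbabilityMeasure ν] (h : BallMassBound ν d1 d2)
    (hd1 : 0 ≤ d1) (hd2 : 0 < d2) {α : Finset E} (hα : α.Nonempty) {r : ℝ} (hr0 : 0 < r)
    (hr1 : r ≤ 1) :
    Integrable (fun x => (Real.log (infDist x α))⁻) ν ∧
      ∫ x, (Real.log (infDist x α))⁻ ∂ν ≤ (α.card * d1) ^ r / (r * d2) := by
  refine integrable_and_integral_le_of_measure_lt_le_exp (by fun_prop)
    (Eventually.of_forall fun x => negPart_nonneg _) (by positivity) (by positivity)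
    fun t ht => ?_
  set y := α.card * d1 * Real.exp (-(d2 * t))
  have hmin : ν {x | t < (Real.log (infDist x α))⁻} ≤ ENNReal.ofReal (min 1 y) := by
    rcases le_total 1 y with hy | hy
    · rw [min_eq_left hy, ENNReal.ofReal_one]
      exact prob_le_one
    · rw [min_eq_right hy]
      exact h.measure_lt_negPart_log_infDist_le hd1 hα ht
  refine hmin.trans <| ENNReal.ofReal_le_ofReal <|
    (min_one_le_rpow (by positivity) hr0 hr1).trans_eq ?_
  rw [Real.mul_rpow (by positivity) (by positivity), ← Real.exp_mul]
  ring_nf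

theorem neg_integral_log_infDist_le [IsProbabilityMeasure ν] (h : BallMassBound ν d1 d2)
    (hd1 : 0 ≤ d1) (hd2 : 0 < d2) {α : Finset E} (hα : α.Nonempty) {r : ℝ} (hr0 : 0 < r)
    (hr1 : r ≤ 1) :
    -∫ x, Real.log (infDist x α) ∂ν ≤ (α.card * d1) ^ r / (r * d2) := by
  have hneg := h.integral_negPart_log_infDist_le hd1 hd2 hα hr0 hr1
  linarith [neg_integral_negPart_le_integral hneg.1]

theorem integrable_log_infDist [IsProbabilityMeasure ν] (h : BallMassBound ν d1 d2)
    (hd1 : 0 ≤ d1) (hd2 : 0 < d2) {K : Set E} (hK : Bornology.IsBounded K) (hsupp : ν Kᶜ = 0)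
    {α : Finset E} (hα : α.Nonempty) :
    Integrable (fun x => Real.log (infDist x α)) ν := by
  obtain ⟨a, ha⟩ := hα
  obtain ⟨R, hR⟩ := hK.subset_closedBall a
  refine integrable_log_of_ae_le
    (Real.measurable_log.comp (continuous_infDist_pt _).measurable).aestronglyMeasurable
    (fun x => infDist_nonneg) (M := R) ?_
    (h.integral_negPart_log_infDist_le hd1 hd2 ⟨a, ha⟩ one_pos le_rfl).1
  filter_upwards [ae_iff.mpr hsupp] with x hx
  exact (infDist_le_dist_of_mem (Finset.mem_coe.mpr ha)).trans (mem_closedBall.mp (hR hx))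

end BallMassBound

section QuantizationError

variable {E : Type*} [NormedAddCommGroup E] [MeasurableSpace E] {ν : Measure E} {m : ℕ}

theorem geErr_le_exp_integral {α : Finset E} (hα : α.Nonempty) (hm : α.card ≤ m) :
    geErr m ν ≤ Real.exp (∫ x, Real.log (infDist x α) ∂ν) :=
  csInf_le ⟨0, by rintro _ ⟨β, -, rfl⟩; exact (Real.exp_pos _).le⟩ ⟨α, ⟨hα, hm⟩, rfl⟩

theorem hatE_le_integral (hpos : 0 < geErr m ν) {α : Finset E} (hα : α.Nonempty)
    (hm : α.card ≤ m) : hatE m ν ≤ ∫ x, Real.log (infDist x α) ∂ν := by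
  simpa only [hatE, Real.log_exp] using Real.log_le_log hpos (geErr_le_exp_integral hα hm)

theorem exists_integral_lt_hatE_add (hpos : 0 < geErr m ν) {δ : ℝ} (hδ : 0 < δ) :
    ∃ α : Finset E, α.Nonempty ∧ α.card ≤ m ∧
      ∫ x, Real.log (infDist x α) ∂ν < hatE m ν + δ := by
  have hlt : geErr m ν < Real.exp (hatE m ν + δ) := by
    rw [Real.exp_add, hatE, Real.exp_log hpos]
    exact lt_mul_of_one_lt_right hpos (Real.one_lt_exp_iff.mpr hδ)
  obtain ⟨_, ⟨α, ⟨hα, hm⟩, rfl⟩, hαlt⟩ := exists_lt_of_csInf_lt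
    (Set.nonempty_iff_ne_empty.mpr fun hempty => hpos.ne' (by rw [geErr, hempty, Real.sInf_empty]))
    hlt
  exact ⟨α, hα, hm, Real.exp_lt_exp.mp hαlt⟩

theorem BallMassBound.geErr_pos [BorelSpace E] [IsProbabilityMeasure ν]
    {d1 d2 : ℝ} (h : BallMassBound ν d1 d2) (hd1 : 0 ≤ d1) (hd2 : 0 < d2) (hm : 1 ≤ m) :
    0 < geErr m ν := by
  obtain ⟨c⟩ := nonempty_of_isProbabilityMeasure ν
  refine (Real.exp_pos (-(m * d1 / d2))).trans_le (le_csInf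
    ⟨_, {c}, ⟨Finset.singleton_nonempty c, by simpa using hm⟩, rfl⟩ ?_)
  rintro _ ⟨α, ⟨hα, hαm⟩, rfl⟩
  rw [Real.exp_le_exp, neg_le]
  refine (h.neg_integral_log_infDist_le hd1 hd2 hα one_pos le_rfl).trans ?_
  rw [Real.rpow_one, one_mul]
  gcongr

theorem exists_card_eq_integral_lt_hatE_add [IsProbabilityMeasure ν] [NullSingletonClass ν]
    (hint : ∀ α : Finset E, α.Nonempty → Integrable (fun x => Real.log (infDist x α)) ν)
    {K : Set E} (hK : Bornology.IsBounded K) (hsupp : ν Kᶜ = 0) (hpos : 0 < geErr m ν)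
    {δ : ℝ} (hδ : 0 < δ) :
    ∃ β : Finset E, β.card = m ∧ (∀ᵐ x ∂ν, ∀ b ∈ β, dist x b ≤ 3 * diam K) ∧
      ∫ x, Real.log (infDist x β) ∂ν < hatE m ν + δ := by
  have hKae : ∀ᵐ x ∂ν, x ∈ K := ae_iff.mpr hsupp
  have hKinf : K.Infinite := infinite_of_measure_compl_eq_zero hsupp
  obtain ⟨c, hc⟩ := hKinf.nonempty
  obtain ⟨γ, hγ, hγm, hγint⟩ := exists_integral_lt_hatE_add hpos hδ
  obtain ⟨β, hβm, hβsub, hβγ⟩ :=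
    exists_card_eq_subset_closedBall_infDist_le hK hKinf hc hγ hγm
  have hβ : β.Nonempty := Finset.card_pos.mp (hβm ▸ hγ.card_pos.trans_le hγm)
  refine ⟨β, hβm, ?_, lt_of_le_of_lt (integral_mono_ae (hint β hβ) (hint γ hγ) ?_) hγint⟩
  · filter_upwards [hKae] with x hx b hb
    linarith [dist_triangle x c b, dist_le_diam_of_mem hK hx hc,
      mem_closedBall'.mp (hβsub (Finset.mem_coe.mpr hb))]
  · filter_upwards [hKae, measure_eq_zero_iff_ae_notMem.mp (β.finite_toSet.measure_zero ν)]
      with x hx hxβ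
    exact Real.log_le_log (Finset.infDist_pos hβ hxβ) (hβγ x hx)

theorem succ_mul_hatE_le [IsProbabilityMeasure ν] [NullSingletonClass ν] (hpos : 0 < geErr m ν)
    (hm : 1 ≤ m) {β : Finset E} (hβ : β.card = m + 1)
    (hint : ∀ α : Finset E, α.Nonempty → Integrable (fun x => Real.log (infDist x α)) ν)
    {R : ℝ} (hR : ∀ᵐ x ∂ν, ∀ b ∈ β, dist x b ≤ R) :
    (m + 1) * hatE m ν ≤ m * ∫ x, Real.log (infDist x β) ∂ν + Real.log R := by
  classical
  have hβne : β.Nonempty := Finset.card_pos.mp (by omega)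
  have herase : ∀ a ∈ β, (β.erase a).Nonempty ∧ (β.erase a).card ≤ m := fun a ha =>
    ⟨Finset.card_pos.mp (by rw [Finset.card_erase_of_mem ha]; omega),
      by rw [Finset.card_erase_of_mem ha]; omega⟩
  calc (m + 1) * hatE m ν = ∑ _a ∈ β, hatE m ν := by simp [hβ]
    _ ≤ ∑ a ∈ β, ∫ x, Real.log (infDist x (β.erase a)) ∂ν :=
        Finset.sum_le_sum fun a ha => hatE_le_integral hpos (herase a ha).1 (herase a ha).2
    _ = ∫ x, ∑ a ∈ β, Real.log (infDist x (β.erase a)) ∂ν :=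
        (integral_finsetSum _ fun a ha => hint _ (herase a ha).1).symm
    _ ≤ ∫ x, (m * Real.log (infDist x β) + Real.log R) ∂ν := by
        refine integral_mono_ae (integrable_finsetSum _ fun a ha => hint _ (herase a ha).1)
          (((hint β hβne).const_mul _).add (integrable_const _)) ?_
        filter_upwards [measure_eq_zero_iff_ae_notMem.mp (β.finite_toSet.measure_zero ν), hR]
          with x hx hxR
        simpa [hβ] using sum_log_infDist_erase_le (by omega) hx hxR
    _ = m * ∫ x, Real.log (infDist x β) ∂ν + Real.log R := by
        rw [integral_add ((hint β hβne).const_mul _) (integrable_const _), integral_const_mul,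
          integral_const, probReal_univ, one_smul]

end QuantizationError

theorem stmt11_general {E : Type*} [NormedAddCommGroup E] [MeasurableSpace E] [BorelSpace E]
    (ν : Measure E) [IsProbabilityMeasure ν]
    (K : Set E) (hK : IsCompact K) (hsupp : ν Kᶜ = 0)
    (d1 d2 : ℝ) (hd1 : 0 < d1) (hd2 : 0 < d2)
    (hball : ∀ (x : E) (ε : ℝ), 0 < ε →
      (ν (Metric.closedBall x ε)).toReal ≤ d1 * ε ^ d2) :
    ∀ p q' : ℝ, 1 < p → 1 < q' → 1 / p + 1 / q' = 1 →
      ∀ n : ℕ, 1 ≤ n →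
        hatE n ν - hatE (n + 1) ν ≤
          ((n : ℝ) + 1)⁻¹ * Real.log (3 * Metric.diam K) +
            d1 ^ (1 / q') * q' * d2⁻¹ * ((n : ℝ) + 1) ^ (-(1 / p)) := by
  intro p q' _ hq' hpq' n hn
  have hmass : BallMassBound ν d1 d2 := hball
  have := hmass.nullSingletonClass hd2
  have hint := fun α (hα : Finset.Nonempty α) =>
    hmass.integrable_log_infDist hd1.le hd2 hK.isBounded hsupp hα
  refine le_of_forall_pos_le_add fun δ hδ => ?_
  obtain ⟨β, hβcard, hR, hβint⟩ := exists_card_eq_integral_lt_hatE_add hint hK.isBounded hsupp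
    (hmass.geErr_pos hd1.le hd2 (by omega : 1 ≤ n + 1)) hδ
  have hloo := succ_mul_hatE_le (hmass.geErr_pos hd1.le hd2 hn) hn hβcard hint hR
  have hneg := hmass.neg_integral_log_infDist_le hd1.le hd2
    (Finset.card_pos.mp (by omega : 0 < β.card)) (r := 1 / q') (by positivity)
    ((div_le_one (by linarith)).mpr hq'.le)
  have hN : (0 : ℝ) < n + 1 := by positivity
  have hconst : (((n + 1 : ℕ) : ℝ) * d1) ^ (1 / q') / (1 / q' * d2) =
      ((n : ℝ) + 1) * (d1 ^ (1 / q') * q' * d2⁻¹ * ((n : ℝ) + 1) ^ (-(1 / p))) := by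
    rw [Nat.cast_succ, Real.mul_rpow hN.le hd1.le, show -(1 / p) = 1 / q' - 1 by linarith,
      Real.rpow_sub hN, Real.rpow_one]
    field_simp
  rw [hβcard, hconst] at hneg
  have hstep := mul_le_mul_of_nonneg_left hβint.le hN.le
  refine le_of_mul_le_mul_left ?_ hN
  rw [mul_add, mul_add, ← mul_assoc, mul_inv_cancel₀ hN.ne', one_mul]
  linarith

theorem stmt11 {E : Type*} [NormedAddCommGroup E] [NormedSpace ℝ E]
    [FiniteDimensional ℝ E] [MeasurableSpace E] [BorelSpace E]
    (ν : Measure E) [IsProbabilityMeasure ν]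
    (K : Set E) (hK : IsCompact K) (hsupp : ν Kᶜ = 0)
    (d1 d2 : ℝ) (hd1 : 0 < d1) (hd2 : 0 < d2)
    (hball : ∀ (x : E) (ε : ℝ), 0 < ε →
      (ν (Metric.closedBall x ε)).toReal ≤ d1 * ε ^ d2) :
    ∀ p q' : ℝ, 1 < p → 1 < q' → 1 / p + 1 / q' = 1 →
      ∀ n : ℕ, 1 ≤ n →
        hatE n ν - hatE (n + 1) ν ≤
          ((n : ℝ) + 1)⁻¹ * Real.log (3 * Metric.diam K) +
            d1 ^ (1 / q') * q' * d2⁻¹ * ((n : ℝ) + 1) ^ (-(1 / p)) :=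
  stmt11_general ν K hK hsupp d1 d2 hd1 hd2 hball
end

section
/- Let ν_1, ..., ν_N be Borel probability measures on ℝ^q with compact support, each satisfying a uniform Hölder ball bound and with quantization dimension of order zero D_0(ν_i) = t_i > 0, and let (q_i) be a positive probability vector. Set ν := Σ_{i=1}^N q_i ν_i and ê_n(μ) := log of the n-th geometric mean quantization error of μ. Then ê_n(ν) ≥ Σ_i q_i ê_n(ν_i) and ê_n(ν) ≤ Σ_i q_i ê_{⌊n/N⌋}(ν_i) for n ≥ 2N, and consequently D_0(ν) = t_0 where 1/t_0 = Σ_{i=1}^N q_i / t_i. -/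
/-!
The ball bound `μ(B(x, ε)) ≤ d₁ ε ^ d₂` gives, through the layer-cake formula,
`∫ (log d(x, α))⁻ dμ ≤ card α * d₁ / d₂`. Hence the integrals `∫ log d(x, α) dμ` are finite and
bounded below, and `hatE n μ` is their infimum over codebooks of size at most `n`. For the
mixture `ν = ∑ qᵢ νᵢ` each such integral is the `q`-weighted sum of the component integrals:
taking infima termwise gives the lower bound, and the union of near-optimal `⌊n/N⌋`-codebooks
of the components gives the upper bound (the ball bound rules out atoms, so that enlarging a
codebook lowers `log d` almost everywhere despite `log 0 = 0`). Since
`log ⌊n/N⌋ ~ log n`, dividing both bounds by `-log n` squeezes `-hatE n ν / log n` to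
`∑ qᵢ / tᵢ`.
-/

open MeasureTheory Filter

open Real Metric Topology Set

section BallBound

variable {X : Type*} [PseudoMetricSpace X] [MeasurableSpace X]

def HasBallBound (μ : Measure X) (d1 d2 : ℝ) : Prop :=
  ∀ (x : X) (ε : ℝ), 0 < ε → (μ (closedBall x ε)).toReal ≤ d1 * ε ^ d2

theorem measurable_log_infDist [OpensMeasurableSpace X] (s : Set X) :
    Measurable fun x => log (infDist x s) :=
  (continuous_infDist_pt s).measurable.log

namespace HasBallBound

variable {μ : Measure X} [IsFiniteMeasure μ] {d1 d2 : ℝ}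

theorem nullSingletonClass (h : HasBallBound μ d1 d2) (hd2 : 0 < d2) :
    NullSingletonClass μ := by
  refine ⟨fun x => ?_⟩
  have hlim : Tendsto (fun ε : ℝ => d1 * ε ^ d2) (𝓝[>] 0) (𝓝 0) := by
    simpa [zero_rpow hd2.ne'] using
      ((continuousAt_rpow_const 0 d2 (Or.inr hd2.le)).tendsto.const_mul d1).mono_left
        nhdsWithin_le_nhds
  have hle : (μ {x}).toReal ≤ 0 := ge_of_tendsto hlim <|
    eventually_nhdsWithin_of_forall fun ε (hε : 0 < ε) =>
      (ENNReal.toReal_mono (measure_ne_top _ _) (measure_mono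
        (singleton_subset_iff.2 (mem_closedBall_self hε.le)))).trans (h x ε hε)
  exact ((ENNReal.toReal_eq_zero_iff _).1 (le_antisymm hle ENNReal.toReal_nonneg)).resolve_right
    (measure_ne_top _ _)

theorem measure_lt_neg_log_infDist_le (h : HasBallBound μ d1 d2) {α : Finset X}
    (hα : α.Nonempty) {s : ℝ} (hs : 0 < s) :
    μ {x | s < -log (infDist x α)} ≤ ENNReal.ofReal (α.card * d1 * exp (-d2 * s)) := by
  have hsub : {x | s < -log (infDist x α)} ⊆ ⋃ a ∈ α, closedBall a (exp (-s)) := by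
    intro x (hx : s < -log (infDist x α))
    have hpos : 0 < infDist x α := infDist_nonneg.lt_of_ne fun h0 => by
      rw [← h0, log_zero] at hx; linarith
    have hlt : infDist x α < exp (-s) := (log_lt_iff_lt_exp hpos).1 (by linarith)
    obtain ⟨a, ha, hxa⟩ := (infDist_lt_iff (by exact_mod_cast hα)).1 hlt
    exact mem_biUnion ha (mem_closedBall.2 hxa.le)
  have hball : ∀ a, μ (closedBall a (exp (-s))) ≤ ENNReal.ofReal (d1 * exp (-d2 * s)) := by
    intro a
    rw [← ENNReal.ofReal_toReal (measure_ne_top μ _)]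
    refine ENNReal.ofReal_le_ofReal ((h a _ (exp_pos _)).trans_eq ?_)
    rw [← exp_mul]; ring_nf
  calc μ {x | s < -log (infDist x α)}
      ≤ ∑ a ∈ α, μ (closedBall a (exp (-s))) :=
        (measure_mono hsub).trans (measure_biUnion_finset_le α _)
    _ ≤ ∑ _a ∈ α, ENNReal.ofReal (d1 * exp (-d2 * s)) := Finset.sum_le_sum fun a _ => hball a
    _ = ENNReal.ofReal (α.card * d1 * exp (-d2 * s)) := by
        rw [Finset.sum_const, nsmul_eq_mul, mul_assoc, ENNReal.ofReal_mul (Nat.cast_nonneg _),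
          ENNReal.ofReal_natCast]

variable [OpensMeasurableSpace X]

theorem lintegral_negPart_log_infDist_le (h : HasBallBound μ d1 d2) (hd1 : 0 ≤ d1)
    (hd2 : 0 < d2) {α : Finset X} (hα : α.Nonempty) :
    ∫⁻ x, ENNReal.ofReal (max (-log (infDist x α)) 0) ∂μ
      ≤ ENNReal.ofReal (α.card * d1 / d2) := by
  have hexp : IntegrableOn (fun s => α.card * d1 * exp (-d2 * s)) (Ioi 0) :=
    (integrableOn_exp_mul_Ioi (neg_lt_zero.2 hd2) 0).const_mul _
  rw [lintegral_eq_lintegral_meas_lt (f := fun x => max (-log (infDist x α)) 0) μ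
    (ae_of_all _ fun x => le_max_right _ _) (by fun_prop)]
  calc ∫⁻ s in Ioi 0, μ {x | s < max (-log (infDist x α)) 0}
      ≤ ∫⁻ s in Ioi 0, ENNReal.ofReal (α.card * d1 * exp (-d2 * s)) := by
        refine setLIntegral_mono (by fun_prop) fun s (hs : 0 < s) => ?_
        simpa only [lt_max_iff, hs.not_gt, or_false] using
          h.measure_lt_neg_log_infDist_le hα hs
    _ = ENNReal.ofReal (α.card * d1 / d2) := by
        rw [← ofReal_integral_eq_lintegral_ofReal hexp (ae_of_all _ fun s => by positivity),
          integral_const_mul, integral_exp_mul_Ioi (neg_lt_zero.2 hd2)]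
        congr 1
        field_simp
        simp

theorem integral_negPart_log_infDist_le (h : HasBallBound μ d1 d2) (hd1 : 0 ≤ d1)
    (hd2 : 0 < d2) {α : Finset X} (hα : α.Nonempty) :
    ∫ x, max (-log (infDist x α)) 0 ∂μ ≤ α.card * d1 / d2 := by
  have hnn : 0 ≤ᵐ[μ] fun x => max (-log (infDist x α)) 0 := ae_of_all _ fun x => le_max_right _ _
  rw [integral_eq_lintegral_of_nonneg_ae hnn
    ((measurable_log_infDist (α : Set X)).neg.max measurable_const).aestronglyMeasurable]
  exact ENNReal.toReal_le_of_le_ofReal (by positivity)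
    (h.lintegral_negPart_log_infDist_le hd1 hd2 hα)

theorem neg_le_integral_log_infDist (h : HasBallBound μ d1 d2) (hd1 : 0 ≤ d1)
    (hd2 : 0 < d2) {α : Finset X} (hα : α.Nonempty) :
    -(α.card * d1 / d2) ≤ ∫ x, log (infDist x α) ∂μ := by
  by_cases hint : Integrable (fun x => log (infDist x α)) μ
  · calc -(α.card * d1 / d2) ≤ -∫ x, max (-log (infDist x α)) 0 ∂μ :=
          neg_le_neg (h.integral_negPart_log_infDist_le hd1 hd2 hα)
      _ = ∫ x, -max (-log (infDist x α)) 0 ∂μ := (integral_neg _).symm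
      _ ≤ ∫ x, log (infDist x α) ∂μ :=
          integral_mono hint.neg.pos_part.neg hint fun x => neg_le.2 (le_max_left _ _)
  · rw [integral_undef hint, neg_nonpos]
    positivity

theorem integrable_log_infDist (h : HasBallBound μ d1 d2) (hd1 : 0 ≤ d1) (hd2 : 0 < d2)
    {K : Set X} (hK : Bornology.IsBounded K) (hsupp : μ Kᶜ = 0) {α : Finset X}
    (hα : α.Nonempty) : Integrable (fun x => log (infDist x α)) μ := by
  obtain ⟨a, ha⟩ := hα
  obtain ⟨R, hR⟩ := hK.subset_closedBall a
  have hnn : 0 ≤ᵐ[μ] fun x => max (-log (infDist x α)) 0 := ae_of_all _ fun x => le_max_right _ _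
  have hneg : Integrable (fun x => max (-log (infDist x α)) 0) μ :=
    ⟨((measurable_log_infDist (α : Set X)).neg.max measurable_const).aestronglyMeasurable,
      (hasFiniteIntegral_iff_ofReal hnn).2
        ((h.lintegral_negPart_log_infDist_le hd1 hd2 ⟨a, ha⟩).trans_lt ENNReal.ofReal_lt_top)⟩
  refine ((integrable_const R).add hneg).mono'
    (measurable_log_infDist (α : Set X)).aestronglyMeasurable ?_
  filter_upwards [measure_eq_zero_iff_ae_notMem.1 hsupp] with x hx
  have hxa : dist x a ≤ R := mem_closedBall.1 (hR (not_not.1 hx))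
  have hup : log (infDist x α) ≤ R := (log_le_self infDist_nonneg).trans
    ((infDist_le_dist_of_mem (by exact_mod_cast ha)).trans hxa)
  have hlow := le_max_left (-log (infDist x α)) 0
  have hnn := le_max_right (-log (infDist x α)) 0
  rw [Pi.add_apply, Real.norm_eq_abs, abs_le]
  constructor <;> linarith [dist_nonneg (x := x) (y := a)]

end HasBallBound

end BallBound

theorem integral_log_infDist_anti {X : Type*} [MetricSpace X] [MeasurableSpace X]
    {μ : Measure X} [NullSingletonClass μ] {α β : Finset X} (hαβ : α ⊆ β) (hα : α.Nonempty)
    (hiα : Integrable (fun x => log (infDist x α)) μ)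
    (hiβ : Integrable (fun x => log (infDist x β)) μ) :
    ∫ x, log (infDist x β) ∂μ ≤ ∫ x, log (infDist x α) ∂μ := by
  refine integral_mono_ae hiβ hiα ?_
  filter_upwards [measure_eq_zero_iff_ae_notMem.1 (β.finite_toSet.measure_zero μ)] with x hx
  have hpos : 0 < infDist x β :=
    (β.finite_toSet.isClosed.notMem_iff_infDist_pos (hα.mono hαβ)).1 hx
  exact log_le_log hpos (infDist_le_infDist_of_subset (by exact_mod_cast hαβ) hα)

section QuantizationError

variable {E : Type*} [NormedAddCommGroup E] [MeasurableSpace E] {μ : Measure E} {n : ℕ}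

-- `hatE n μ = sInf (logErrSet n μ)` needs this set to be bounded below: otherwise
-- `geErr n μ = 0` and `hatE n μ = log 0 = 0`.
def logErrSet (n : ℕ) (μ : Measure E) : Set ℝ :=
  (fun α : Finset E => ∫ x, log (infDist x α) ∂μ) '' {α | α.Nonempty ∧ α.card ≤ n}

theorem logErrSet_nonempty [Nonempty E] (hn : 0 < n) : (logErrSet n μ).Nonempty :=
  let x := Classical.arbitrary E
  ⟨_, {x}, ⟨Finset.singleton_nonempty x, (Finset.card_singleton x).trans_le hn⟩, rfl⟩

theorem hatE_eq_sInf_logErrSet (hne : (logErrSet n μ).Nonempty)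
    (hbdd : BddBelow (logErrSet n μ)) : hatE n μ = sInf (logErrSet n μ) := by
  rw [hatE, geErr, ← Set.image_image (g := exp), ← logErrSet,
    ← Monotone.map_csInf_of_continuousAt continuous_exp.continuousAt exp_monotone hne hbdd,
    log_exp]

variable [OpensMeasurableSpace E] [IsFiniteMeasure μ] {d1 d2 : ℝ}

theorem HasBallBound.bddBelow_logErrSet (h : HasBallBound μ d1 d2) (hd1 : 0 ≤ d1)
    (hd2 : 0 < d2) : BddBelow (logErrSet n μ) := by
  refine ⟨-(n * d1 / d2), ?_⟩
  rintro _ ⟨α, ⟨hα, hcard⟩, rfl⟩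
  refine le_trans ?_ (h.neg_le_integral_log_infDist hd1 hd2 hα)
  gcongr

theorem HasBallBound.hatE_le_integral_log_infDist (h : HasBallBound μ d1 d2) (hd1 : 0 ≤ d1)
    (hd2 : 0 < d2) {α : Finset E} (hα : α.Nonempty) (hcard : α.card ≤ n) :
    hatE n μ ≤ ∫ x, log (infDist x α) ∂μ := by
  have hmem : ∫ x, log (infDist x α) ∂μ ∈ logErrSet n μ := ⟨α, ⟨hα, hcard⟩, rfl⟩
  rw [hatE_eq_sInf_logErrSet ⟨_, hmem⟩ (h.bddBelow_logErrSet hd1 hd2)]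
  exact csInf_le (h.bddBelow_logErrSet hd1 hd2) hmem

variable [Nonempty E]

theorem HasBallBound.le_hatE_of_forall_le (h : HasBallBound μ d1 d2) (hd1 : 0 ≤ d1)
    (hd2 : 0 < d2) (hn : 0 < n) {c : ℝ}
    (hc : ∀ α : Finset E, α.Nonempty → α.card ≤ n → c ≤ ∫ x, log (infDist x α) ∂μ) :
    c ≤ hatE n μ := by
  rw [hatE_eq_sInf_logErrSet (logErrSet_nonempty hn) (h.bddBelow_logErrSet hd1 hd2)]
  refine le_csInf (logErrSet_nonempty hn) ?_
  rintro _ ⟨α, ⟨hα, hcard⟩, rfl⟩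
  exact hc α hα hcard

theorem HasBallBound.exists_integral_log_infDist_lt (h : HasBallBound μ d1 d2) (hd1 : 0 ≤ d1)
    (hd2 : 0 < d2) (hn : 0 < n) {c : ℝ} (hc : hatE n μ < c) :
    ∃ α : Finset E, α.Nonempty ∧ α.card ≤ n ∧ ∫ x, log (infDist x α) ∂μ < c := by
  rw [hatE_eq_sInf_logErrSet (logErrSet_nonempty hn) (h.bddBelow_logErrSet hd1 hd2)] at hc
  obtain ⟨_, ⟨α, ⟨hα, hcard⟩, rfl⟩, hlt⟩ := exists_lt_of_csInf_lt (logErrSet_nonempty hn) hc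
  exact ⟨α, hα, hcard, hlt⟩

end QuantizationError

section Mixture

variable {X : Type*} [MeasurableSpace X] {ι : Type*} [Fintype ι] {ν : ι → Measure X}
  {q : ι → ℝ}

theorem toReal_sum_smul_apply [∀ i, IsFiniteMeasure (ν i)] (hq : ∀ i, 0 ≤ q i) (s : Set X) :
    ((∑ i, ENNReal.ofReal (q i) • ν i) s).toReal = ∑ i, q i * (ν i s).toReal := by
  simp only [Measure.finsetSum_apply, Measure.smul_apply, smul_eq_mul]
  rw [ENNReal.toReal_sum fun i _ => ENNReal.mul_ne_top ENNReal.ofReal_ne_top (measure_ne_top _ _)]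
  simp only [ENNReal.toReal_mul, ENNReal.toReal_ofReal (hq _)]

theorem isProbabilityMeasure_sum_smul [∀ i, IsProbabilityMeasure (ν i)] (hq : ∀ i, 0 ≤ q i)
    (hq1 : ∑ i, q i = 1) : IsProbabilityMeasure (∑ i, ENNReal.ofReal (q i) • ν i) := by
  constructor
  simp only [Measure.finsetSum_apply, Measure.smul_apply, smul_eq_mul, measure_univ, mul_one]
  rw [← ENNReal.ofReal_sum_of_nonneg fun i _ => hq i, hq1, ENNReal.ofReal_one]

theorem integral_sum_smul_measure {f : X → ℝ} (hf : ∀ i, Integrable f (ν i))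
    (hq : ∀ i, 0 ≤ q i) :
    ∫ x, f x ∂(∑ i, ENNReal.ofReal (q i) • ν i) = ∑ i, q i * ∫ x, f x ∂ν i := by
  rw [integral_finsetSum_measure fun i _ => (hf i).smul_measure ENNReal.ofReal_ne_top]
  simp only [integral_smul_measure, ENNReal.toReal_ofReal (hq _), smul_eq_mul]

theorem HasBallBound.sum_smul [PseudoMetricSpace X] [∀ i, IsFiniteMeasure (ν i)] {d1 d2 : ℝ}
    (hν : ∀ i, HasBallBound (ν i) d1 d2) (hq : ∀ i, 0 ≤ q i) (hq1 : ∑ i, q i = 1) :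
    HasBallBound (∑ i, ENNReal.ofReal (q i) • ν i) d1 d2 := fun x ε hε => by
  calc ((∑ i, ENNReal.ofReal (q i) • ν i) (closedBall x ε)).toReal
      = ∑ i, q i * (ν i (closedBall x ε)).toReal := toReal_sum_smul_apply hq _
    _ ≤ ∑ i, q i * (d1 * ε ^ d2) :=
        Finset.sum_le_sum fun i _ => mul_le_mul_of_nonneg_left (hν i x ε hε) (hq i)
    _ = d1 * ε ^ d2 := by rw [← Finset.sum_mul, hq1, one_mul]

end Mixture

section MixtureQuantization

variable {E : Type*} [NormedAddCommGroup E] [MeasurableSpace E] [OpensMeasurableSpace E]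
  {ι : Type*} [Fintype ι] {ν : ι → Measure E} [∀ i, IsProbabilityMeasure (ν i)]
  {K : ι → Set E} {q : ι → ℝ} {d1 d2 : ℝ} {n : ℕ}

theorem sum_mul_hatE_le_hatE_sum_smul (hν : ∀ i, HasBallBound (ν i) d1 d2) (hd1 : 0 ≤ d1)
    (hd2 : 0 < d2) (hK : ∀ i, Bornology.IsBounded (K i)) (hsupp : ∀ i, ν i (K i)ᶜ = 0)
    (hq : ∀ i, 0 ≤ q i) (hq1 : ∑ i, q i = 1) (hn : 0 < n) :
    ∑ i, q i * hatE n (ν i) ≤ hatE n (∑ i, ENNReal.ofReal (q i) • ν i) := by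
  have := isProbabilityMeasure_sum_smul (ν := ν) hq hq1
  have := nonempty_of_isProbabilityMeasure (∑ i, ENNReal.ofReal (q i) • ν i)
  refine (HasBallBound.sum_smul hν hq hq1).le_hatE_of_forall_le hd1 hd2 hn fun α hα hcard => ?_
  rw [integral_sum_smul_measure
    (fun i => (hν i).integrable_log_infDist hd1 hd2 (hK i) (hsupp i) hα) hq]
  exact Finset.sum_le_sum fun i _ => mul_le_mul_of_nonneg_left
    ((hν i).hatE_le_integral_log_infDist hd1 hd2 hα hcard) (hq i)

theorem hatE_sum_smul_le_sum_mul_hatE [Nonempty ι] (hν : ∀ i, HasBallBound (ν i) d1 d2)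
    (hd1 : 0 ≤ d1) (hd2 : 0 < d2) (hK : ∀ i, Bornology.IsBounded (K i))
    (hsupp : ∀ i, ν i (K i)ᶜ = 0) (hq : ∀ i, 0 ≤ q i) (hq1 : ∑ i, q i = 1) {m : ℕ}
    (hm : 0 < m) (hmn : Fintype.card ι * m ≤ n) :
    hatE n (∑ i, ENNReal.ofReal (q i) • ν i) ≤ ∑ i, q i * hatE m (ν i) := by
  classical
  have := isProbabilityMeasure_sum_smul (ν := ν) hq hq1
  have := nonempty_of_isProbabilityMeasure (ν (Classical.arbitrary ι))
  have := fun i => (hν i).nullSingletonClass hd2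
  have hint : ∀ i {α : Finset E}, α.Nonempty → Integrable (fun x => log (infDist x α)) (ν i) :=
    fun i _ hα => (hν i).integrable_log_infDist hd1 hd2 (hK i) (hsupp i) hα
  refine le_of_forall_pos_le_add fun ε hε => ?_
  choose α hα hcard hlt using fun i => (hν i).exists_integral_log_infDist_lt hd1 hd2 hm
    (lt_add_of_pos_right (hatE m (ν i)) hε)
  set β := Finset.univ.biUnion α
  have hβ : β.Nonempty := Finset.univ_nonempty.biUnion fun i _ => hα i
  have hβcard : β.card ≤ n := calc
    β.card ≤ ∑ i, (α i).card := Finset.card_biUnion_le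
    _ ≤ ∑ _i : ι, m := Finset.sum_le_sum fun i _ => hcard i
    _ ≤ n := by rwa [Finset.sum_const, smul_eq_mul, Finset.card_univ]
  calc hatE n (∑ i, ENNReal.ofReal (q i) • ν i)
      ≤ ∫ x, log (infDist x β) ∂(∑ i, ENNReal.ofReal (q i) • ν i) :=
        (HasBallBound.sum_smul hν hq hq1).hatE_le_integral_log_infDist hd1 hd2 hβ hβcard
    _ = ∑ i, q i * ∫ x, log (infDist x β) ∂ν i := integral_sum_smul_measure (hint · hβ) hq
    _ ≤ ∑ i, q i * (hatE m (ν i) + ε) := Finset.sum_le_sum fun i _ =>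
        mul_le_mul_of_nonneg_left ((integral_log_infDist_anti
          (Finset.subset_biUnion_of_mem α (Finset.mem_univ i)) (hα i) (hint i (hα i))
          (hint i hβ)).trans (hlt i).le) (hq i)
    _ = ∑ i, q i * hatE m (ν i) + ε := by
        simp only [mul_add, Finset.sum_add_distrib, ← Finset.sum_mul, hq1, one_mul]

end MixtureQuantization

section Asymptotics

theorem tendsto_log_nat_div_div_log {N : ℕ} (hN : 0 < N) :
    Tendsto (fun n : ℕ => log (n / N : ℕ) / log n) atTop (𝓝 1) := by
  have hlog : Tendsto (fun n : ℕ => log n) atTop atTop :=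
    tendsto_log_atTop.comp tendsto_natCast_atTop_atTop
  have hlower : Tendsto (fun n : ℕ => 1 - log (2 * N) / log n) atTop (𝓝 1) := by
    simpa using tendsto_const_nhds.sub (tendsto_const_nhds.div_atTop hlog)
  refine tendsto_of_tendsto_of_tendsto_of_le_of_le' hlower tendsto_const_nhds ?_ ?_
  all_goals
    filter_upwards [eventually_ge_atTop (max N 2)] with n hn
    have hk : 0 < n / N := Nat.div_pos (le_of_max_le_left hn) hN
    have hlogn : 0 < log n := log_pos (by exact_mod_cast le_of_max_le_right hn)
  · have hnk : n ≤ n / N * (2 * N) := by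
      have := Nat.div_add_mod n N
      have := Nat.mod_lt n hN
      have := Nat.le_mul_of_pos_right N hk
      linarith
    rw [one_sub_div hlogn.ne', div_le_div_iff_of_pos_right hlogn, sub_le_iff_le_add,
      ← log_mul (Nat.cast_ne_zero.2 hk.ne') (by positivity)]
    exact log_le_log (Nat.cast_pos.2 (by omega)) (by exact_mod_cast hnk)
  · rw [div_le_one hlogn]
    exact log_le_log (by exact_mod_cast hk) (by exact_mod_cast Nat.div_le_self n N)

theorem tendsto_log_div_neg_of_sum_bounds {ι : Type*} [Fintype ι] {q t : ι → ℝ}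
    {e : ι → ℕ → ℝ} {f : ℕ → ℝ} {N : ℕ} (hN : 0 < N) (ht : ∀ i, t i ≠ 0)
    (hs : ∑ i, q i / t i ≠ 0) (he : ∀ i, Tendsto (fun n : ℕ => log n / -e i n) atTop (𝓝 (t i)))
    (hlow : ∀ᶠ n in atTop, ∑ i, q i * e i n ≤ f n)
    (hup : ∀ᶠ n in atTop, f n ≤ ∑ i, q i * e i (n / N)) :
    Tendsto (fun n : ℕ => log n / -f n) atTop (𝓝 (∑ i, q i / t i)⁻¹) := by
  have hdiv := Nat.tendsto_div_const_atTop hN.ne'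
  have hlog : ∀ᶠ n : ℕ in atTop, 0 < log n :=
    (tendsto_log_atTop.comp tendsto_natCast_atTop_atTop).eventually_gt_atTop 0
  have hA : ∀ i, Tendsto (fun n : ℕ => -e i n / log n) atTop (𝓝 (t i)⁻¹) := fun i => by
    simpa only [inv_div] using (he i).inv₀ (ht i)
  have hB : ∀ i, Tendsto (fun n : ℕ => -e i (n / N) / log n) atTop (𝓝 (t i)⁻¹) := fun i => by
    have := ((hA i).comp hdiv).mul (tendsto_log_nat_div_div_log hN)
    rw [mul_one] at this
    refine this.congr' ?_
    filter_upwards [hdiv.eventually hlog] with n hn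
    exact div_mul_div_cancel₀ hn.ne'
  have hsum : ∀ g : ℕ → ℕ, (∀ i, Tendsto (fun n => -e i (g n) / log n) atTop (𝓝 (t i)⁻¹)) →
      Tendsto (fun n => -(∑ i, q i * e i (g n)) / log n) atTop (𝓝 (∑ i, q i / t i)) := by
    intro g hg
    convert tendsto_finsetSum Finset.univ fun i _ => (hg i).const_mul (q i) using 1
    · ext n
      simp only [← Finset.sum_neg_distrib, Finset.sum_div, mul_neg, mul_div_assoc, neg_div]
    · simp only [div_eq_mul_inv]
  have hsq : Tendsto (fun n => -f n / log n) atTop (𝓝 (∑ i, q i / t i)) := by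
    refine tendsto_of_tendsto_of_tendsto_of_le_of_le' (hsum (· / N) hB) (hsum id hA) ?_ ?_
    · filter_upwards [hup, hlog] with n h hn
      exact div_le_div_of_nonneg_right (neg_le_neg h) hn.le
    · filter_upwards [hlow, hlog] with n h hn
      exact div_le_div_of_nonneg_right (neg_le_neg h) hn.le
  simpa only [inv_div] using hsq.inv₀ hs

end Asymptotics

theorem stmt12_general {E : Type*} [NormedAddCommGroup E] [MeasurableSpace E] [BorelSpace E]
    {N : ℕ} (hN : 0 < N) (ν : Fin N → Measure E) [∀ i, IsProbabilityMeasure (ν i)]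
    (K : Fin N → Set E) (hK : ∀ i, IsCompact (K i)) (hsupp : ∀ i, ν i (K i)ᶜ = 0)
    (d1 d2 : ℝ) (hd1 : 0 < d1) (hd2 : 0 < d2)
    (hball : ∀ i, ∀ (x : E) (ε : ℝ), 0 < ε →
      (ν i (Metric.closedBall x ε)).toReal ≤ d1 * ε ^ d2)
    (t : Fin N → ℝ) (ht : ∀ i, 0 < t i)
    (hD0 : ∀ i, Tendsto (fun n : ℕ => Real.log n / (-(hatE n (ν i)))) atTop
      (nhds (t i)))
    (q : Fin N → ℝ) (hq : ∀ i, 0 < q i) (hq1 : ∑ i, q i = 1)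
    (νmix : Measure E) (hmix : νmix = ∑ i, ENNReal.ofReal (q i) • ν i)
    (t0 : ℝ) (ht0 : t0 = (∑ i, q i / t i)⁻¹) :
    (∀ n : ℕ, 1 ≤ n → ∑ i, q i * hatE n (ν i) ≤ hatE n νmix) ∧
    (∀ n : ℕ, 2 * N ≤ n → hatE n νmix ≤ ∑ i, q i * hatE (n / N) (ν i)) ∧
    Tendsto (fun n : ℕ => Real.log n / (-(hatE n νmix))) atTop (nhds t0) := by
  have hq0 : ∀ i, 0 ≤ q i := fun i => (hq i).le
  have hbdd : ∀ i, Bornology.IsBounded (K i) := fun i => (hK i).isBounded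
  have : Nonempty (Fin N) := ⟨⟨0, hN⟩⟩
  subst hmix ht0
  have hlow : ∀ n : ℕ, 1 ≤ n → ∑ i, q i * hatE n (ν i) ≤ hatE n (∑ i, ENNReal.ofReal (q i) • ν i) :=
    fun n hn => sum_mul_hatE_le_hatE_sum_smul hball hd1.le hd2 hbdd hsupp hq0 hq1 hn
  have hup : ∀ n : ℕ, 2 * N ≤ n →
      hatE n (∑ i, ENNReal.ofReal (q i) • ν i) ≤ ∑ i, q i * hatE (n / N) (ν i) :=
    fun n hn => hatE_sum_smul_le_sum_mul_hatE hball hd1.le hd2 hbdd hsupp hq0 hq1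
      (Nat.div_pos (by omega) hN) (by simpa using Nat.mul_div_le n N)
  have hs : ∑ i, q i / t i ≠ 0 :=
    (Finset.sum_pos (fun i _ => div_pos (hq i) (ht i)) Finset.univ_nonempty).ne'
  exact ⟨hlow, hup, tendsto_log_div_neg_of_sum_bounds hN (fun i => (ht i).ne') hs hD0
    ((eventually_ge_atTop 1).mono hlow) ((eventually_ge_atTop (2 * N)).mono hup)⟩

theorem stmt12 {E : Type*} [NormedAddCommGroup E] [NormedSpace ℝ E]
    [FiniteDimensional ℝ E] [MeasurableSpace E] [BorelSpace E]
    {N : ℕ} (hN : 0 < N) (ν : Fin N → Measure E) [∀ i, IsProbabilityMeasure (ν i)]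
    (K : Fin N → Set E) (hK : ∀ i, IsCompact (K i)) (hsupp : ∀ i, ν i (K i)ᶜ = 0)
    (d1 d2 : ℝ) (hd1 : 0 < d1) (hd2 : 0 < d2)
    (hball : ∀ i, ∀ (x : E) (ε : ℝ), 0 < ε →
      (ν i (Metric.closedBall x ε)).toReal ≤ d1 * ε ^ d2)
    (t : Fin N → ℝ) (ht : ∀ i, 0 < t i)
    (hD0 : ∀ i, Tendsto (fun n : ℕ => Real.log n / (-(hatE n (ν i)))) atTop
      (nhds (t i)))
    (q : Fin N → ℝ) (hq : ∀ i, 0 < q i) (hq1 : ∑ i, q i = 1)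
    (νmix : Measure E) (hmix : νmix = ∑ i, ENNReal.ofReal (q i) • ν i)
    (t0 : ℝ) (ht0 : t0 = (∑ i, q i / t i)⁻¹) :
    (∀ n : ℕ, 1 ≤ n → ∑ i, q i * hatE n (ν i) ≤ hatE n νmix) ∧
    (∀ n : ℕ, 2 * N ≤ n → hatE n νmix ≤ ∑ i, q i * hatE (n / N) (ν i)) ∧
    Tendsto (fun n : ℕ => Real.log n / (-(hatE n νmix))) atTop (nhds t0) :=
  stmt12_general hN ν K hK hsupp d1 d2 hd1 hd2 hball t ht hD0 q hq hq1 νmix hmix t0 ht0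
end
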